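/- arXiv:1809.02716 — 8 statements merged into one kernel-verified Lean document; each statement's English description precedes it below -/
import Mathlib

section
/- For every M-element subset W of {0,1}^L, the size of the 1-substitution ball B_1(W) is at least the number of boundary edges of the indicator function f_W on the hypercube, i.e. |B_1(W)| ≥ |∂f_W|. -/
/-- The `K`-substitution ball of a word `W`. -/
def subBall (L K : ℕ) (W : Finset (Fin L → Bool)) : Set (Finset (Fin L → Bool)) :=
  {V | ∃ g : (Fin L → Bool) → (Fin L → Bool),
    (∑ x ∈ W, hammingDist x (g x)) ≤ K ∧ V = W.image g}

/-- The boundary of the indicator function of `W` on the hypercube: each boundary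
edge, i.e. each pair of strings at Hamming distance 1 with exactly one endpoint in
`W`, is represented by the ordered pair whose first coordinate is the endpoint
in `W`. -/
def boundary (L : ℕ) (W : Finset (Fin L → Bool)) :
    Set ((Fin L → Bool) × (Fin L → Bool)) :=
  {p | p.1 ∈ W ∧ p.2 ∉ W ∧ hammingDist p.1 p.2 = 1}

theorem stmt_7 (L M : ℕ) (W : Finset (Fin L → Bool)) (hW : W.card = M) :
    (boundary L W).ncard ≤ (subBall L 1 W).ncard := by
  classical
  set F : ((Fin L → Bool) × (Fin L → Bool)) → Finset (Fin L → Bool) :=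
    fun p => W.image (fun z => if z = p.1 then p.2 else z) with hF
  -- membership characterization
  have hmem : ∀ p ∈ boundary L W, ∀ w,
      w ∈ F p ↔ ((w ∈ W ∧ w ≠ p.1) ∨ w = p.2) := by
    intro p hp w
    obtain ⟨h1, h2, h3⟩ := hp
    simp only [hF, Finset.mem_image]
    constructor
    · rintro ⟨z, hz, hzw⟩
      by_cases hzp : z = p.1
      · right; rw [if_pos hzp] at hzw; exact hzw.symm
      · left; rw [if_neg hzp] at hzw; subst hzw; exact ⟨hz, hzp⟩
    · rintro (⟨hw, hwp⟩ | rfl)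
      · exact ⟨w, hw, by simp [hwp]⟩
      · exact ⟨p.1, h1, by simp⟩
  have hne : ∀ p ∈ boundary L W, p.1 ≠ p.2 := by
    intro p hp
    intro h
    have := hp.2.2
    rw [h] at this
    simp [hammingDist_self] at this
  apply Set.ncard_le_ncard_of_injOn F
  · intro p hp
    obtain ⟨h1, h2, h3⟩ := hp
    refine ⟨fun z => if z = p.1 then p.2 else z, ?_, rfl⟩
    rw [Finset.sum_eq_single p.1]
    · simp [h3]
    · intro b _ hb; simp [hb]
    · intro h; exact absurd h1 h
  · intro p hp q hq hpq
    have h2 : q.2 = p.2 := by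
      have hq2 : q.2 ∈ F q := (hmem q hq q.2).2 (Or.inr rfl)
      rw [← hpq] at hq2
      rcases (hmem p hp q.2).1 hq2 with ⟨hw, _⟩ | h
      · exact absurd hw hq.2.1
      · exact h
    have h1 : q.1 = p.1 := by
      have hq1 : q.1 ∉ F q := by
        intro h
        rcases (hmem q hq q.1).1 h with ⟨_, hne'⟩ | h
        · exact hne' rfl
        · exact hne q hq h
      rw [← hpq] at hq1
      by_contra hne'
      exact hq1 ((hmem p hp q.1).2 (Or.inl ⟨hq.1, hne'⟩))
    exact (Prod.ext h1 h2).symm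
end

section
/- For every Boolean-valued function f: {±1}^L → {±1}, the total influence I(f) satisfies I(f) ≥ 2α·log₂(1/α), where α = min{Pr[f = 1], Pr[f = −1]} under the uniform distribution. -/
open Finset Real

/-!
Edge-isoperimetry of the hypercube: a set `A ⊆ {0,1}^L` contains at most `|A| log₂ |A|` ordered
pairs `(x, i)` with both `x` and `x^{⊕i}` in `A`. Induct on `L`, splitting `A` along the first
coordinate into `A₀` and `A₁`: the pairs in direction `0` number at most `2 min(|A₀|, |A₁|)`, and
`a log₂ a + b log₂ b + 2 min(a, b) ≤ (a + b) log₂ (a + b)` closes the induction.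
Since every point has `L` neighbours, at least `|A| (L - log₂ |A|)` pairs leave `A`; counting them
from both ends gives `2^L I(f) ≥ 2 |A| log₂ (2^L / |A|)` for `A = f⁻¹(b)`, whichever `b` is rarer.
-/

lemma le_logb_two_one_add {t : ℝ} (h0 : 0 ≤ t) (h1 : t ≤ 1) : t ≤ logb 2 (1 + t) := by
  -- `2 ^ t` is convex, hence below its chord `1 + t` on `[0, 1]`
  have hexp : exp (t * log 2) ≤ 1 + t := by
    have := convexOn_exp.2 (Set.mem_univ 0) (Set.mem_univ (log 2)) (sub_nonneg.2 h1) h0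
      (by ring)
    simp only [smul_eq_mul, mul_zero, zero_add, exp_zero, exp_log two_pos] at this
    linarith
  rw [le_logb_iff_rpow_le one_lt_two (by linarith), rpow_def_of_pos two_pos, mul_comm]
  exact hexp

lemma mul_logb_add_mul_logb_add_two_mul_le {a b : ℝ} (ha : 0 ≤ a) (hab : a ≤ b) :
    a * logb 2 a + b * logb 2 b + 2 * a ≤ (a + b) * logb 2 (a + b) := by
  rcases ha.eq_or_lt with rfl | ha
  · simp
  have hb : 0 < b := ha.trans_le hab
  have h2a : a * (logb 2 a + 1) ≤ a * logb 2 (a + b) := by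
    gcongr
    calc logb 2 a + 1 = logb 2 (2 * a) := by
          rw [logb_mul two_ne_zero ha.ne', logb_self_eq_one one_lt_two, add_comm]
      _ ≤ logb 2 (a + b) := logb_le_logb_of_le one_lt_two (by positivity) (by linarith)
  have h2b : b * (logb 2 b + a / b) ≤ b * logb 2 (a + b) := by
    gcongr
    calc logb 2 b + a / b ≤ logb 2 b + logb 2 (1 + a / b) :=
          add_le_add_right (le_logb_two_one_add (by positivity) ((div_le_one hb).2 hab)) _
      _ = logb 2 (a + b) := by
          rw [← logb_mul hb.ne' (by positivity), mul_add, mul_one, mul_div_cancel₀ _ hb.ne',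
            add_comm]
  rw [mul_add, mul_div_cancel₀ _ hb.ne'] at h2b
  linarith

lemma mul_logb_add_mul_logb_add_two_mul_min_le {a b : ℝ} (ha : 0 ≤ a) (hb : 0 ≤ b) :
    a * logb 2 a + b * logb 2 b + 2 * min a b ≤ (a + b) * logb 2 (a + b) := by
  rcases le_total a b with h | h
  · simpa [min_eq_left h] using mul_logb_add_mul_logb_add_two_mul_le ha h
  · simpa [min_eq_right h, add_comm] using mul_logb_add_mul_logb_add_two_mul_le hb h

lemma div_two_pow_mul_logb_one_div (c : ℝ) (L : ℕ) :
    c / 2 ^ L * logb 2 (1 / (c / 2 ^ L)) = c * (L - logb 2 c) / 2 ^ L := by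
  rcases eq_or_ne c 0 with rfl | hc
  · simp
  rw [one_div_div, logb_div (by positivity) hc, logb_pow, logb_self_eq_one one_lt_two]
  ring

section Hypercube

variable {L : ℕ}

def flipCoord (i : Fin L) (x : Fin L → Bool) : Fin L → Bool := Function.update x i (!x i)

lemma flipCoord_involutive (i : Fin L) : Function.Involutive (flipCoord i) := by
  intro x
  simp [flipCoord]

lemma flipCoord_zero_cons (b : Bool) (x : Fin L → Bool) :
    flipCoord 0 (Fin.cons b x : Fin (L + 1) → Bool) = Fin.cons (!b) x := by
  simp [flipCoord, Fin.update_cons_zero]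

lemma flipCoord_succ_cons (j : Fin L) (b : Bool) (x : Fin L → Bool) :
    flipCoord j.succ (Fin.cons b x : Fin (L + 1) → Bool) = Fin.cons b (flipCoord j x) := by
  simp [flipCoord, ← Fin.cons_update]

lemma card_filter_cons (P : (Fin (L + 1) → Bool) → Prop) [DecidablePred P] :
    #{x | P x} = #{x | P (Fin.cons false x)} + #{x | P (Fin.cons true x)} := by
  simp only [card_filter]
  rw [← (Fin.consEquiv fun _ => Bool).sum_comp, Fintype.sum_prod_type, Fintype.sum_bool,
    add_comm]
  rfl

/-- Twice the number of hypercube edges inside `P`: each edge is counted from both ends. -/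
def innerEdgeCount (P : (Fin L → Bool) → Prop) [DecidablePred P] : ℕ :=
  ∑ i, #{x | P x ∧ P (flipCoord i x)}

lemma innerEdgeCount_succ (P : (Fin (L + 1) → Bool) → Prop) [DecidablePred P] :
    innerEdgeCount P = 2 * #{x | P (Fin.cons false x) ∧ P (Fin.cons true x)}
      + innerEdgeCount (fun x => P (Fin.cons false x))
      + innerEdgeCount (fun x => P (Fin.cons true x)) := by
  have hzero : #{y | P y ∧ P (flipCoord 0 y)}
      = 2 * #{x | P (Fin.cons false x) ∧ P (Fin.cons true x)} := by
    rw [card_filter_cons, two_mul]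
    simp only [flipCoord_zero_cons, Bool.not_false, Bool.not_true,
      and_comm (a := P (Fin.cons true _))]
  have hsucc (j : Fin L) : #{y | P y ∧ P (flipCoord j.succ y)}
      = #{x | P (Fin.cons false x) ∧ P (Fin.cons false (flipCoord j x))}
        + #{x | P (Fin.cons true x) ∧ P (Fin.cons true (flipCoord j x))} := by
    rw [card_filter_cons]
    simp only [flipCoord_succ_cons]
  rw [innerEdgeCount, Fin.sum_univ_succ, hzero, Finset.sum_congr rfl fun j _ => hsucc j,
    sum_add_distrib, innerEdgeCount, innerEdgeCount, add_assoc]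

theorem innerEdgeCount_le (P : (Fin L → Bool) → Prop) [DecidablePred P] :
    (innerEdgeCount P : ℝ) ≤ #{x | P x} * logb 2 #{x | P x} := by
  induction L with
  | zero =>
    have hcard : #{x | P x} ≤ 1 := (card_filter_le _ _).trans_eq (by simp)
    interval_cases #{x | P x} <;> simp [innerEdgeCount]
  | succ L ih =>
    have hboth (b : Bool) : (#{x | P (Fin.cons false x) ∧ P (Fin.cons true x)} : ℝ)
        ≤ #{x | P (Fin.cons b x)} := by
      gcongr with x
      cases b
      exacts [fun h => h.1, fun h => h.2]
    have hreal := mul_logb_add_mul_logb_add_two_mul_min_le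
      (Nat.cast_nonneg (α := ℝ) #{x | P (Fin.cons false x)})
      (Nat.cast_nonneg (α := ℝ) #{x | P (Fin.cons true x)})
    rw [innerEdgeCount_succ, card_filter_cons P]
    push_cast
    linarith [ih fun x => P (Fin.cons false x), ih fun x => P (Fin.cons true x),
      le_min (hboth false) (hboth true)]

lemma card_boundary_add_two_mul_card_inner (P : (Fin L → Bool) → Prop) [DecidablePred P]
    (i : Fin L) :
    #{x | ¬(P x ↔ P (flipCoord i x))} + 2 * #{x | P x ∧ P (flipCoord i x)} = 2 * #{x | P x} := by
  have hP : #{x | P x} = #{x | P x ∧ P (flipCoord i x)} + #{x | P x ∧ ¬P (flipCoord i x)} := by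
    rw [← filter_filter, ← filter_filter, card_filter_add_card_filter_not]
  have hbdry : #{x | ¬(P x ↔ P (flipCoord i x))}
      = #{x | P x ∧ ¬P (flipCoord i x)} + #{x | ¬P x ∧ P (flipCoord i x)} := by
    rw [← card_filter_add_card_filter_not P, filter_filter, filter_filter]
    congr 3 <;> ext x <;> tauto
  have hin : #{x | ¬P x ∧ P (flipCoord i x)} = #{x | P x ∧ ¬P (flipCoord i x)} := by
    have hinv := flipCoord_involutive i
    refine card_nbij' (flipCoord i) (flipCoord i) ?_ ?_ (fun x _ => hinv x)
      (fun x _ => hinv x) <;> intro x <;> simp [hinv x, and_comm]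
  omega

theorem two_mul_card_mul_sub_logb_le_sum_card_boundary (P : (Fin L → Bool) → Prop)
    [DecidablePred P] :
    2 * #{x | P x} * (L - logb 2 #{x | P x}) ≤ ∑ i, (#{x | ¬(P x ↔ P (flipCoord i x))} : ℝ) := by
  have hbdry (i : Fin L) : (#{x | ¬(P x ↔ P (flipCoord i x))} : ℝ)
      = 2 * #{x | P x} - 2 * #{x | P x ∧ P (flipCoord i x)} := by
    rw [eq_sub_iff_add_eq]
    exact_mod_cast card_boundary_add_two_mul_card_inner P i
  have := innerEdgeCount_le P
  rw [innerEdgeCount, Nat.cast_sum] at this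
  simp only [hbdry, sum_sub_distrib, sum_const, card_univ, Fintype.card_fin, nsmul_eq_mul,
    ← mul_sum]
  linarith

end Hypercube

lemma two_mul_density_mul_logb_inv_le_sum_influence {L : ℕ} (f : (Fin L → Bool) → Bool)
    (b : Bool) :
    2 * ((#{x | f x = b} : ℝ) / 2 ^ L) * logb 2 (1 / ((#{x | f x = b} : ℝ) / 2 ^ L))
      ≤ ∑ i, (#{x | f x ≠ f (Function.update x i (!x i))} : ℝ) / 2 ^ L := by
  have hne (i : Fin L) : #{x | f x ≠ f (Function.update x i (!x i))}
      = #{x | ¬(f x = b ↔ f (flipCoord i x) = b)} := by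
    congr 1
    ext x
    simp only [flipCoord]
    cases b <;> cases f x <;> cases f (Function.update x i (!x i)) <;> simp
  rw [mul_assoc, div_two_pow_mul_logb_one_div, ← sum_div, mul_div_assoc']
  gcongr
  rw [← mul_assoc]
  simpa only [hne] using two_mul_card_mul_sub_logb_le_sum_card_boundary fun x => f x = b

theorem stmt_8 (L : ℕ) (f : (Fin L → Bool) → Bool) :
    2 * min (((Finset.univ.filter fun x : Fin L → Bool => f x = true).card : ℝ) / 2 ^ L)
            (((Finset.univ.filter fun x : Fin L → Bool => f x = false).card : ℝ) / 2 ^ L)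
      * Real.logb 2
          (1 / min (((Finset.univ.filter fun x : Fin L → Bool => f x = true).card : ℝ) / 2 ^ L)
                   (((Finset.univ.filter fun x : Fin L → Bool => f x = false).card : ℝ) / 2 ^ L))
      ≤ ∑ i : Fin L,
          (((Finset.univ.filter fun x : Fin L → Bool =>
              f x ≠ f (Function.update x i (!x i))).card : ℝ) / 2 ^ L) := by
  rcases min_choice (#{x | f x = true} / 2 ^ L : ℝ) (#{x | f x = false} / 2 ^ L) with h | h <;>
    rw [h]
  exacts [two_mul_density_mul_logb_inv_le_sum_influence f true,
    two_mul_density_mul_logb_inv_le_sum_influence f false]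
end

section
/- Let 0 < ε < 1 and M ≤ 2^{(1−ε)L}. Then any 1-substitution-correcting code C ⊆ binom({0,1}^L, M) satisfies |C| ≤ binom(2^L, M)/(εML); consequently r(C) ≥ log(ML) − O(1). -/
open Finset Real

section Hypercube

variable {n : ℕ}

def degreeIn (S : Finset (Fin n → Bool)) (x : Fin n → Bool) : ℕ :=
  #{y ∈ S | hammingDist x y = 1}

-- Counts ordered pairs, so it is twice the number of hypercube edges inside `S`.
def edgeCount (S : Finset (Fin n → Bool)) : ℕ :=
  ∑ x ∈ S, degreeIn S x

def headSlice (S : Finset (Fin (n + 1) → Bool)) (b : Bool) : Finset (Fin n → Bool) :=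
  {f | Fin.cons b f ∈ S}

lemma sum_eq_sum_headSlice {β : Type*} [AddCommMonoid β] (S : Finset (Fin (n + 1) → Bool))
    (F : (Fin (n + 1) → Bool) → β) :
    ∑ x ∈ S, F x = ∑ b, ∑ f ∈ headSlice S b, F (Fin.cons b f) := by
  calc ∑ x ∈ S, F x = ∑ x, if x ∈ S then F x else 0 := by
        rw [← sum_filter, filter_mem_eq_inter, univ_inter]
    _ = ∑ p : Bool × (Fin n → Bool), if Fin.cons p.1 p.2 ∈ S then F (Fin.cons p.1 p.2) else 0 :=
        (Fintype.sum_equiv (Fin.consEquiv _) _ _ fun _ => rfl).symm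
    _ = _ := by simp only [Fintype.sum_prod_type, headSlice, sum_filter]

lemma card_eq_card_headSlice_add_card_headSlice (S : Finset (Fin (n + 1) → Bool)) :
    #S = #(headSlice S false) + #(headSlice S true) := by
  simp only [card_eq_sum_ones, sum_eq_sum_headSlice S, Fintype.sum_bool, add_comm]

lemma hammingDist_cons (b c : Bool) (f g : Fin n → Bool) :
    hammingDist (Fin.cons b f : Fin (n + 1) → Bool) (Fin.cons c g)
      = (if b = c then 0 else 1) + hammingDist f g := by
  simp only [hammingDist, card_filter, Fin.sum_univ_succ, Fin.cons_zero, Fin.cons_succ, ite_not]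

lemma degreeIn_cons (S : Finset (Fin (n + 1) → Bool)) (b : Bool) (f : Fin n → Bool) :
    degreeIn S (Fin.cons b f)
      = degreeIn (headSlice S b) f + if f ∈ headSlice S (!b) then 1 else 0 := by
  simp only [degreeIn, card_filter, sum_eq_sum_headSlice S, hammingDist_cons]
  cases b <;> simp [hammingDist_eq_zero, add_comm, filter_eq, apply_ite card]

lemma edgeCount_eq_edgeCount_headSlice_add (S : Finset (Fin (n + 1) → Bool)) :
    edgeCount S = edgeCount (headSlice S false) + edgeCount (headSlice S true)
      + 2 * #(headSlice S false ∩ headSlice S true) := by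
  simp only [edgeCount, sum_eq_sum_headSlice S, degreeIn_cons, sum_add_distrib, sum_boole,
    Nat.cast_id, Fintype.sum_bool, Bool.not_true, Bool.not_false, filter_mem_eq_inter,
    inter_comm (headSlice S true)]
  ring

lemma card_hammingDist_eq_one (x : Fin n → Bool) : #{y | hammingDist x y = 1} = n := by
  induction n with
  | zero => simp [hammingDist]
  | succ n ih =>
    rw [← Fin.cons_self_tail x, card_filter, sum_eq_sum_headSlice]
    simp only [headSlice, Finset.mem_univ, Finset.filter_true, hammingDist_cons]
    cases x 0 <;> simp [hammingDist_eq_zero, filter_eq, ih, add_comm]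

lemma edgeCount_le_card_mul_logb (S : Finset (Fin n → Bool)) :
    (edgeCount S : ℝ) ≤ #S * logb 2 #S := by
  induction n with
  | zero =>
    have h_edge : edgeCount S = 0 := by
      simp [edgeCount, degreeIn, hammingDist_self]
    rw [h_edge, Nat.cast_zero, logb]
    positivity
  | succ n ih =>
    set A := headSlice S false
    set B := headSlice S true
    have h_inter : (#(A ∩ B) : ℝ) ≤ min (#A : ℝ) #B := by
      exact_mod_cast le_min (card_le_card inter_subset_left) (card_le_card inter_subset_right)
    calc (edgeCount S : ℝ) = edgeCount A + edgeCount B + 2 * #(A ∩ B) := by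
          rw [edgeCount_eq_edgeCount_headSlice_add]; push_cast; ring
      _ ≤ #A * logb 2 #A + #B * logb 2 #B + 2 * min (#A : ℝ) #B := by
          linarith [ih A, ih B]
      _ ≤ (#A + #B) * logb 2 (#A + #B) :=
          mul_logb_add_mul_logb_add_two_mul_min_le (Nat.cast_nonneg _) (Nat.cast_nonneg _)
      _ = #S * logb 2 #S := by rw [card_eq_card_headSlice_add_card_headSlice S]; push_cast; rfl

end Hypercube

section NeighbourWords

variable {L : ℕ}

def edgeBoundary (W : Finset (Fin L → Bool)) : Finset ((Fin L → Bool) × (Fin L → Bool)) :=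
  {p ∈ W ×ˢ Wᶜ | hammingDist p.1 p.2 = 1}

lemma card_edgeBoundary_add_edgeCount (W : Finset (Fin L → Bool)) :
    #(edgeBoundary W) + edgeCount W = #W * L := by
  have h_deg : ∀ x, #{y ∈ Wᶜ | hammingDist x y = 1} + degreeIn W x = L := by
    intro x
    rw [add_comm, degreeIn, ← card_union_of_disjoint (disjoint_filter_filter disjoint_compl_right),
      ← filter_union, union_compl, card_hammingDist_eq_one]
  calc #(edgeBoundary W) + edgeCount W
        = ∑ x ∈ W, (#{y ∈ Wᶜ | hammingDist x y = 1} + degreeIn W x) := by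
          rw [edgeBoundary, card_filter, sum_product, edgeCount, ← sum_add_distrib]
          simp only [card_filter]
    _ = #W * L := by rw [sum_congr rfl fun x _ => h_deg x, sum_const, smul_eq_mul]

def neighbourWords (W : Finset (Fin L → Bool)) : Finset (Finset (Fin L → Bool)) :=
  (edgeBoundary W).image fun p => insert p.2 (W.erase p.1)

lemma card_neighbourWords (W : Finset (Fin L → Bool)) :
    #(neighbourWords W) = #(edgeBoundary W) := by
  have h_sdiff : ∀ p ∈ edgeBoundary W,
      W \ insert p.2 (W.erase p.1) = {p.1} ∧ insert p.2 (W.erase p.1) \ W = {p.2} := by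
    rintro ⟨x, y⟩ hp
    simp only [edgeBoundary, mem_filter, mem_product, mem_compl] at hp
    constructor <;> ext z <;> simp only [mem_sdiff, mem_insert, mem_erase, mem_singleton] <;> grind
  refine card_image_of_injOn fun p hp q hq h => ?_
  obtain ⟨hp1, hp2⟩ := h_sdiff p hp
  obtain ⟨hq1, hq2⟩ := h_sdiff q hq
  rw [h, hq1, singleton_inj] at hp1
  rw [h, hq2, singleton_inj] at hp2
  exact Prod.ext hp1.symm hp2.symm

lemma neighbourWords_subset_powersetCard (W : Finset (Fin L → Bool)) :
    neighbourWords W ⊆ powersetCard #W univ := by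
  simp only [subset_iff, neighbourWords, edgeBoundary, mem_image, mem_filter, mem_product,
    mem_compl, mem_powersetCard_univ]
  rintro _ ⟨⟨x, y⟩, ⟨⟨hx, hy⟩, -⟩, rfl⟩
  rw [card_insert_of_notMem (fun h => hy (mem_of_mem_erase h)), card_erase_add_one hx]

lemma neighbourWords_subset_subBall (W : Finset (Fin L → Bool)) :
    ↑(neighbourWords W) ⊆ subBall L 1 W := by
  simp only [Set.subset_def, mem_coe, neighbourWords, edgeBoundary, mem_image, mem_filter,
    mem_product, mem_compl]
  rintro _ ⟨⟨x, y⟩, ⟨⟨hx, hy⟩, hxy⟩, rfl⟩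
  refine ⟨Function.update id x y, ?_, ?_⟩
  · rw [sum_eq_single_of_mem x hx fun z _ hz => by simp [hz]]
    simp [hxy]
  · ext z
    simp only [mem_insert, mem_erase, mem_image, Function.update_apply, id]
    grind

lemma card_mul_sub_card_mul_logb_le_card_neighbourWords (W : Finset (Fin L → Bool)) :
    (#W : ℝ) * L - #W * logb 2 #W ≤ #(neighbourWords W) := by
  have h_count : (#(neighbourWords W) : ℝ) + edgeCount W = #W * L := by
    exact_mod_cast card_neighbourWords W ▸ card_edgeBoundary_add_edgeCount W
  linarith [edgeCount_le_card_mul_logb W]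

lemma sum_card_neighbourWords_le_choose {M : ℕ} (C : Finset (Finset (Fin L → Bool)))
    (hCM : ∀ W ∈ C, #W = M)
    (hCcode : ∀ W ∈ C, ∀ W' ∈ C, W ≠ W' → Disjoint (subBall L 1 W) (subBall L 1 W')) :
    ∑ W ∈ C, #(neighbourWords W) ≤ (2 ^ L).choose M := by
  have h_disj : (C : Set (Finset (Fin L → Bool))).PairwiseDisjoint neighbourWords :=
    fun W hW W' hW' hne => disjoint_coe.1 <| (hCcode W hW W' hW' hne).mono
      (neighbourWords_subset_subBall W) (neighbourWords_subset_subBall W')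
  have h_sub : C.biUnion neighbourWords ⊆ powersetCard M univ :=
    biUnion_subset.2 fun W hW => hCM W hW ▸ neighbourWords_subset_powersetCard W
  simpa [← card_biUnion h_disj] using card_le_card h_sub

end NeighbourWords

lemma logb_le_logb_sub_logb_natCast {b a B : ℝ} {N : ℕ} (hb : 1 < b) (ha : 0 < a)
    (hN : N * a ≤ B) (haB : a ≤ B) : logb b a ≤ logb b B - logb b N := by
  rcases N.eq_zero_or_pos with rfl | hN0
  · simpa using logb_le_logb_of_le hb ha haB
  · have h := logb_le_logb_of_le hb (by positivity) hN
    rw [logb_mul (by positivity) ha.ne'] at h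
    linarith

theorem stmt_10_general (ε : ℝ) (hε0 : 0 < ε) (L M : ℕ) (hM0 : 0 < M)
    (hM : (M : ℝ) ≤ 2 ^ ((1 - ε) * L)) (hL : 1 / ε < (L : ℝ))
    (C : Finset (Finset (Fin L → Bool)))
    (hCM : ∀ W ∈ C, W.card = M)
    (hCcode : ∀ W ∈ C, ∀ W' ∈ C, W ≠ W' → Disjoint (subBall L 1 W) (subBall L 1 W')) :
    (C.card : ℝ) ≤ ((2 ^ L).choose M : ℝ) / (ε * M * L) ∧
    Real.logb 2 (M * L) + Real.logb 2 ε
      ≤ Real.logb 2 ((2 ^ L).choose M) - Real.logb 2 C.card := by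
  have hL0 : (0 : ℝ) < L := (one_div_pos.2 hε0).trans hL
  have hM0' : (0 : ℝ) < M := Nat.cast_pos.2 hM0
  have h_nbr : ∀ W : Finset (Fin L → Bool), #W = M → ε * M * L ≤ #(neighbourWords W) := by
    intro W hW
    have h_logM : logb 2 M ≤ (1 - ε) * L := (logb_le_iff_le_rpow one_lt_two hM0').2 hM
    have h := card_mul_sub_card_mul_logb_le_card_neighbourWords W
    rw [hW] at h
    nlinarith [mul_le_mul_of_nonneg_left h_logM hM0'.le]
  have h_pack : (#C : ℝ) * (ε * M * L) ≤ (2 ^ L).choose M :=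
    calc (#C : ℝ) * (ε * M * L) = ∑ W ∈ C, ε * M * L := by rw [sum_const, nsmul_eq_mul]
      _ ≤ ∑ W ∈ C, (#(neighbourWords W) : ℝ) := sum_le_sum fun W hW => h_nbr W (hCM W hW)
      _ ≤ (2 ^ L).choose M := by exact_mod_cast sum_card_neighbourWords_le_choose C hCM hCcode
  have h_word : ε * M * L ≤ (2 ^ L).choose M := by
    have hM_le : M ≤ #(univ : Finset (Fin L → Bool)) := by
      have h := hM.trans (rpow_le_rpow_of_exponent_le one_le_two (by nlinarith : (1 - ε) * L ≤ L))
      rw [rpow_natCast] at h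
      simpa using (by exact_mod_cast h : M ≤ 2 ^ L)
    obtain ⟨W, -, hW⟩ := exists_subset_card_eq hM_le
    exact (h_nbr W hW).trans (by
      exact_mod_cast sum_card_neighbourWords_le_choose {W} (by simpa using hW) (by simp))
  refine ⟨(le_div_iff₀ (by positivity)).2 (by linarith), ?_⟩
  have h_log := logb_le_logb_sub_logb_natCast one_lt_two (by positivity) h_pack h_word
  rwa [mul_assoc, logb_mul hε0.ne' (by positivity), add_comm] at h_log

theorem stmt_10 (ε : ℝ) (hε0 : 0 < ε) (hε1 : ε < 1) (L M : ℕ) (hM0 : 0 < M)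
    (hM : (M : ℝ) ≤ 2 ^ ((1 - ε) * L)) (hL : 1 / ε < (L : ℝ))
    (C : Finset (Finset (Fin L → Bool)))
    (hCM : ∀ W ∈ C, W.card = M)
    (hCcode : ∀ W ∈ C, ∀ W' ∈ C, W ≠ W' → Disjoint (subBall L 1 W) (subBall L 1 W')) :
    (C.card : ℝ) ≤ ((2 ^ L).choose M : ℝ) / (ε * M * L) ∧
    Real.logb 2 (M * L) + Real.logb 2 ε
      ≤ Real.logb 2 ((2 ^ L).choose M) - Real.logb 2 C.card :=
  stmt_10_general ε hε0 L M hM0 hM hL C hCM hCcode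
end

section
/- For every M-subset W of {0,1}^L, |B_K(W)| ≥ (number of special K-subsets of ∂f_W)/K^K, where a subset S of K boundary edges is special if no two edges of S share an endpoint inside W. -/
/-- A set `S` of `K` boundary edges of `W` is special if no two distinct edges of
`S` share their endpoint inside `W`. -/
def IsSpecial (L K : ℕ) (W : Finset (Fin L → Bool))
    (S : Finset ((Fin L → Bool) × (Fin L → Bool))) : Prop :=
  ↑S ⊆ boundary L W ∧ S.card = K ∧
    ∀ e₁ ∈ S, ∀ e₂ ∈ S, e₁ ≠ e₂ → e₁.1 ≠ e₂.1

namespace Stmt11Aux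

variable {L K : ℕ}

/-- The substituted word corresponding to a special edge set. -/
def Φ (W : Finset (Fin L → Bool)) (S : Finset ((Fin L → Bool) × (Fin L → Bool))) :
    Finset (Fin L → Bool) :=
  (W \ S.image Prod.fst) ∪ S.image Prod.snd

/-- The substitution function corresponding to an edge set. -/
noncomputable def pick (S : Finset ((Fin L → Bool) × (Fin L → Bool)))
    (x : Fin L → Bool) : Fin L → Bool :=
  if h : ∃ e ∈ S, e.1 = x then h.choose.2 else x

lemma pick_eq {S : Finset ((Fin L → Bool) × (Fin L → Bool))} {W : Finset (Fin L → Bool)}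
    (hsp : IsSpecial L K W S) {e : (Fin L → Bool) × (Fin L → Bool)} (he : e ∈ S) :
    pick S e.1 = e.2 := by
  have h : ∃ e' ∈ S, e'.1 = e.1 := ⟨e, he, rfl⟩
  have hspec := h.choose_spec
  have : h.choose = e := by
    by_contra hne
    exact hsp.2.2 _ hspec.1 _ he hne hspec.2
  simp only [pick, dif_pos h, this]

lemma pick_eq_self {S : Finset ((Fin L → Bool) × (Fin L → Bool))}
    {x : Fin L → Bool} (h : ¬ ∃ e ∈ S, e.1 = x) : pick S x = x := by
  simp only [pick, dif_neg h]

lemma injOn_fst {S : Finset ((Fin L → Bool) × (Fin L → Bool))} {W : Finset (Fin L → Bool)}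
    (hsp : IsSpecial L K W S) :
    Set.InjOn Prod.fst (S : Set ((Fin L → Bool) × (Fin L → Bool))) := by
  intro e₁ h₁ e₂ h₂ h
  by_contra hne
  exact hsp.2.2 _ h₁ _ h₂ hne h

lemma image_pick {S : Finset ((Fin L → Bool) × (Fin L → Bool))} {W : Finset (Fin L → Bool)}
    (hsp : IsSpecial L K W S) : W.image (pick S) = Φ W S := by
  classical
  ext z
  simp only [Φ, Finset.mem_image, Finset.mem_union, Finset.mem_sdiff]
  constructor
  · rintro ⟨x, hx, rfl⟩
    by_cases h : ∃ e ∈ S, e.1 = x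
    · obtain ⟨e, he, he1⟩ := h
      right
      subst he1
      exact ⟨e, he, (pick_eq hsp he).symm⟩
    · rw [pick_eq_self h]
      left
      exact ⟨hx, h⟩
  · rintro (⟨hz, hz2⟩ | hz)
    · exact ⟨z, hz, pick_eq_self hz2⟩
    · obtain ⟨e, he, he2⟩ := hz
      have h1 : e.1 ∈ W := (hsp.1 he).1
      exact ⟨e.1, h1, by rw [pick_eq hsp he, he2]⟩

lemma phi_mem_subBall {S : Finset ((Fin L → Bool) × (Fin L → Bool))}
    {W : Finset (Fin L → Bool)} (hsp : IsSpecial L K W S) :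
    Φ W S ∈ subBall L K W := by
  classical
  refine ⟨pick S, ?_, (image_pick hsp).symm⟩
  calc ∑ x ∈ W, hammingDist x (pick S x)
      ≤ ∑ x ∈ W, (if x ∈ S.image Prod.fst then 1 else 0) := by
        apply Finset.sum_le_sum
        intro x hx
        by_cases h : ∃ e ∈ S, e.1 = x
        · obtain ⟨e, he, he1⟩ := h
          subst he1
          rw [pick_eq hsp he, if_pos (Finset.mem_image_of_mem _ he)]
          exact le_of_eq (hsp.1 he).2.2
        · rw [pick_eq_self h, hammingDist_self]
          exact Nat.zero_le _
    _ = (W.filter (· ∈ S.image Prod.fst)).card := by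
        rw [← Finset.sum_filter, Finset.sum_const, smul_eq_mul, mul_one]
    _ ≤ (S.image Prod.fst).card :=
        Finset.card_le_card (fun x hx => (Finset.mem_filter.1 hx).2)
    _ = S.card := Finset.card_image_of_injOn (injOn_fst hsp)
    _ = K := hsp.2.1

lemma fst_mem_sdiff {S : Finset ((Fin L → Bool) × (Fin L → Bool))}
    {W V : Finset (Fin L → Bool)} (hsp : IsSpecial L K W S) (hV : Φ W S = V)
    {e : (Fin L → Bool) × (Fin L → Bool)} (he : e ∈ S) : e.1 ∈ W \ V := by
  classical
  refine Finset.mem_sdiff.2 ⟨(hsp.1 he).1, ?_⟩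
  rw [← hV]
  simp only [Φ, Finset.mem_union, Finset.mem_sdiff, Finset.mem_image]
  push_neg
  constructor
  · intro _; exact ⟨e, he, rfl⟩
  · rintro e' he' h2
    exact (hsp.1 he').2.1 (h2 ▸ (hsp.1 he).1)

lemma snd_mem_sdiff {S : Finset ((Fin L → Bool) × (Fin L → Bool))}
    {W V : Finset (Fin L → Bool)} (hsp : IsSpecial L K W S) (hV : Φ W S = V)
    {e : (Fin L → Bool) × (Fin L → Bool)} (he : e ∈ S) : e.2 ∈ V \ W := by
  classical
  refine Finset.mem_sdiff.2 ⟨?_, (hsp.1 he).2.1⟩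
  rw [← hV]
  exact Finset.mem_union_right _ (Finset.mem_image_of_mem _ he)

lemma sdiff_subset_image_fst {S : Finset ((Fin L → Bool) × (Fin L → Bool))}
    {W V : Finset (Fin L → Bool)} (hV : Φ W S = V)
    {x : Fin L → Bool} (hx : x ∈ W \ V) : ∃ e ∈ S, e.1 = x := by
  classical
  obtain ⟨hxW, hxV⟩ := Finset.mem_sdiff.1 hx
  rw [← hV] at hxV
  simp only [Φ, Finset.mem_union, Finset.mem_sdiff, Finset.mem_image] at hxV
  push_neg at hxV
  exact hxV.1 hxW

end Stmt11Aux

theorem stmt_11 (L M K : ℕ) (W : Finset (Fin L → Bool)) (hW : W.card = M) :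
    (({S | IsSpecial L K W S}.ncard : ℝ)) / (K : ℝ) ^ K
      ≤ ((subBall L K W).ncard : ℝ) := by
  classical
  open Stmt11Aux in
  have hfin1 : {S | IsSpecial L K W S}.Finite := Set.toFinite _
  have hfin2 : (subBall L K W).Finite := Set.toFinite _
  set s : Finset (Finset ((Fin L → Bool) × (Fin L → Bool))) := hfin1.toFinset with hs
  set t : Finset (Finset (Fin L → Bool)) := hfin2.toFinset with ht
  have hmem_s : ∀ S, S ∈ s ↔ IsSpecial L K W S := fun S => hfin1.mem_toFinset
  have hmem_t : ∀ V, V ∈ t ↔ V ∈ subBall L K W := fun V => hfin2.mem_toFinset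
  -- the key cardinality bound in ℕ
  have key : s.card ≤ K ^ K * t.card := by
    apply Finset.card_le_mul_card_image_of_maps_to (f := fun S => Φ W S)
    · intro S hS
      exact (hmem_t _).2 (phi_mem_subBall ((hmem_s S).1 hS))
    · intro V hV
      -- bound the fiber over V
      by_cases hVW : (V \ W : Finset (Fin L → Bool)) = ∅
      · -- every fiber member is empty
        have : {S ∈ s | Φ W S = V} ⊆ {∅} := by
          intro S hS
          obtain ⟨hS1, hS2⟩ := Finset.mem_filter.1 hS
          have hsp := (hmem_s S).1 hS1
          rw [Finset.mem_singleton]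
          by_contra hne
          obtain ⟨e, he⟩ := Finset.nonempty_iff_ne_empty.2 hne
          have := snd_mem_sdiff hsp hS2 he
          rw [hVW] at this
          exact absurd this (Finset.notMem_empty _)
        calc ({S ∈ s | Φ W S = V}).card ≤ ({∅} :
              Finset (Finset ((Fin L → Bool) × (Fin L → Bool)))).card :=
            Finset.card_le_card this
          _ = 1 := Finset.card_singleton _
          _ ≤ K ^ K := by
            rcases Nat.eq_zero_or_pos K with h | h
            · simp [h]
            · exact Nat.one_le_pow _ _ h
      · -- V \ W is nonempty
        obtain ⟨y₀, hy₀⟩ := Finset.nonempty_iff_ne_empty.2 hVW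
        by_cases hfib : ({S ∈ s | Φ W S = V}).Nonempty
        swap
        · rw [Finset.not_nonempty_iff_eq_empty.1 hfib]
          simp
        obtain ⟨S₀, hS₀⟩ := hfib
        obtain ⟨hS₀s, hS₀V⟩ := Finset.mem_filter.1 hS₀
        have hsp₀ := (hmem_s S₀).1 hS₀s
        -- cardinalities of the two difference sets
        have hWV : (W \ V : Finset (Fin L → Bool)) = S₀.image Prod.fst := by
          apply Finset.Subset.antisymm
          · intro x hx
            obtain ⟨e, he, he1⟩ := sdiff_subset_image_fst hS₀V hx
            exact Finset.mem_image.2 ⟨e, he, he1⟩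
          · intro x hx
            obtain ⟨e, he, he1⟩ := Finset.mem_image.1 hx
            exact he1 ▸ fst_mem_sdiff hsp₀ hS₀V he
        have hcardWV : (W \ V : Finset (Fin L → Bool)).card = K := by
          rw [hWV, Finset.card_image_of_injOn (injOn_fst hsp₀), hsp₀.2.1]
        have hcardVW : (V \ W : Finset (Fin L → Bool)).card ≤ K := by
          have hsub : (V \ W : Finset (Fin L → Bool)) ⊆ S₀.image Prod.snd := by
            intro z hz
            obtain ⟨hzV, hzW⟩ := Finset.mem_sdiff.1 hz
            rw [← hS₀V] at hzV
            simp only [Φ, Finset.mem_union, Finset.mem_sdiff] at hzV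
            rcases hzV with ⟨h1, _⟩ | h
            · exact absurd h1 hzW
            · exact h
          calc (V \ W : Finset (Fin L → Bool)).card ≤ (S₀.image Prod.snd).card :=
              Finset.card_le_card hsub
            _ ≤ S₀.card := Finset.card_image_le
            _ = K := hsp₀.2.1
        -- injection into functions
        set F : Finset ((Fin L → Bool) × (Fin L → Bool)) →
            ((W \ V : Finset (Fin L → Bool)) → (V \ W : Finset (Fin L → Bool))) :=
          fun S x =>
            if h : ∃ e ∈ S, e.1 = (x : Fin L → Bool) ∧ e.2 ∈ V \ W then
              ⟨h.choose.2, h.choose_spec.2.2⟩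
            else ⟨y₀, hy₀⟩ with hF
        have hinj : Set.InjOn F ({S ∈ s | Φ W S = V} : Finset _) := by
          intro S hS S' hS' hFeq
          simp only [Finset.coe_filter, Set.mem_setOf_eq] at hS hS'
          have hsp := (hmem_s S).1 hS.1
          have hsp' := (hmem_s S').1 hS'.1
          have main : ∀ (S₁ S₂ : Finset ((Fin L → Bool) × (Fin L → Bool))),
              IsSpecial L K W S₁ → IsSpecial L K W S₂ → Φ W S₁ = V → Φ W S₂ = V →
              F S₁ = F S₂ → S₁ ⊆ S₂ := by
            intro S₁ S₂ hsp₁ hsp₂ hV₁ hV₂ heq e he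
            have hx : e.1 ∈ W \ V := fst_mem_sdiff hsp₁ hV₁ he
            set x : (W \ V : Finset (Fin L → Bool)) := ⟨e.1, hx⟩ with hxd
            have h₁ : ∃ e' ∈ S₁, e'.1 = (x : Fin L → Bool) ∧ e'.2 ∈ V \ W :=
              ⟨e, he, rfl, snd_mem_sdiff hsp₁ hV₁ he⟩
            have h₂ : ∃ e' ∈ S₂, e'.1 = (x : Fin L → Bool) ∧ e'.2 ∈ V \ W := by
              obtain ⟨e', he', he'1⟩ := sdiff_subset_image_fst hV₂ hx
              exact ⟨e', he', he'1, snd_mem_sdiff hsp₂ hV₂ he'⟩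
            have hv₁ : F S₁ x = ⟨e.2, snd_mem_sdiff hsp₁ hV₁ he⟩ := by
              have hch := h₁.choose_spec
              have : h₁.choose = e := by
                by_contra hne
                exact hsp₁.2.2 _ hch.1 _ he hne hch.2.1
              simp only [hF, dif_pos h₁]
              exact Subtype.ext (congrArg Prod.snd this)
            have hch₂ := h₂.choose_spec
            have hv₂ : F S₂ x = ⟨h₂.choose.2, hch₂.2.2⟩ := by
              simp only [hF, dif_pos h₂]
            have : h₂.choose = e := by
              have hvv : F S₁ x = F S₂ x := by rw [heq]
              rw [hv₁, hv₂] at hvv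
              have h2eq : e.2 = h₂.choose.2 := congrArg Subtype.val hvv
              exact Prod.ext hch₂.2.1 h2eq.symm
            exact this ▸ hch₂.1
          exact Finset.Subset.antisymm
            (main S S' hsp hsp' hS.2 hS'.2 hFeq)
            (main S' S hsp' hsp hS'.2 hS.2 hFeq.symm)
        calc ({S ∈ s | Φ W S = V}).card
            ≤ (Finset.univ : Finset ((W \ V : Finset (Fin L → Bool)) →
                (V \ W : Finset (Fin L → Bool)))).card :=
            Finset.card_le_card_of_injOn F (fun a _ => Finset.mem_univ _) hinj
          _ = (V \ W : Finset (Fin L → Bool)).card ^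
                (W \ V : Finset (Fin L → Bool)).card := by
              rw [Finset.card_univ, Fintype.card_fun, Fintype.card_coe, Fintype.card_coe]
          _ ≤ K ^ K := by
              rw [hcardWV]
              exact Nat.pow_le_pow_left hcardVW K
  -- transfer to ℝ
  have hpos : (0 : ℝ) < (K : ℝ) ^ K := by
    rcases Nat.eq_zero_or_pos K with h | h
    · simp [h]
    · exact pow_pos (by exact_mod_cast h) K
  rw [div_le_iff₀ hpos, Set.ncard_eq_toFinset_card _ hfin1, Set.ncard_eq_toFinset_card _ hfin2]
  calc ((s.card : ℝ)) ≤ ((K ^ K * t.card : ℕ) : ℝ) := by exact_mod_cast key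
    _ = (t.card : ℝ) * (K : ℝ) ^ K := by push_cast; ring
end

section
/- Let 0 < ε, c < 1 be constants, M ≤ 2^{(1−ε)L}, and K ≤ cε√M (with M, L sufficiently large so that εML − K + 1 ≥ εML/√2). Then the number of special K-subsets of ∂f_W is at least (1−c²)·binom(|∂f_W|, K) for every M-subset W of {0,1}^L. -/
/-!
Every vertex of `W` has `L` neighbours, so `|∂W| = ML - 2e(W)`, and the edge-isoperimetric
inequality of the cube, `2e(W) ≤ M log₂ M ≤ (1 - ε)ML` (induction on `L`, splitting the cube along
one coordinate), gives `|∂W| ≥ εML`. A non-special `K`-set contains two boundary edges leaving a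
common vertex of `W`; there are at most `M·C(L,2)` such pairs, and a fixed pair lies in a
`C(K,2)/C(|∂W|,2)` fraction of all `K`-subsets of `∂W`. Since `K² ≤ c²ε²M` and
`|∂W|(|∂W| - 1) ≥ (εML)²/2`, the non-special sets form at most a `c²` fraction.
-/

open Finset Real

lemma natCast_mul_logb_nonneg (m : ℕ) : 0 ≤ (m : ℝ) * logb 2 m :=
  mul_nonneg m.cast_nonneg (div_nonneg (log_natCast_nonneg m) (log_nonneg one_le_two))

lemma card_filter_powersetCard_superset_mul_le {α : Type*} [DecidableEq α] (A B : Finset α)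
    (K : ℕ) : #{S ∈ B.powersetCard K | A ⊆ S} * (#B).choose #A ≤ (#B).choose K * K.choose #A := by
  by_cases hAB : A ⊆ B ∧ #A ≤ K
  · rw [card_filter_powersetCard_subset _ _ _ hAB.1 hAB.2, Nat.choose_mul hAB.2, mul_comm]
  · rw [filter_eq_empty_iff.2 fun S hS hAS => hAB ⟨hAS.trans (mem_powersetCard.1 hS).1,
      (card_le_card hAS).trans (mem_powersetCard.1 hS).2.le⟩]
    simp

lemma card_filter_powersetCard_mul_choose_le {α ι : Type*} [DecidableEq α] {B : Finset α}
    {T : Finset ι} {A : ι → Finset α} {m K : ℕ} (P : Finset α → Prop) [DecidablePred P]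
    (hA : ∀ t ∈ T, #(A t) = m) (hP : ∀ S ∈ B.powersetCard K, P S → ∃ t ∈ T, A t ⊆ S) :
    #{S ∈ B.powersetCard K | P S} * (#B).choose m ≤ #T * ((#B).choose K * K.choose m) := by
  have hcover : {S ∈ B.powersetCard K | P S} ⊆
      T.biUnion fun t => {S ∈ B.powersetCard K | A t ⊆ S} := by
    intro S hS
    obtain ⟨hSB, hPS⟩ := mem_filter.1 hS
    obtain ⟨t, ht, hAS⟩ := hP S hSB hPS
    exact mem_biUnion.2 ⟨t, ht, mem_filter.2 ⟨hSB, hAS⟩⟩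
  calc #{S ∈ B.powersetCard K | P S} * (#B).choose m
      ≤ (∑ t ∈ T, #{S ∈ B.powersetCard K | A t ⊆ S}) * (#B).choose m := by
        gcongr; exact (card_le_card hcover).trans card_biUnion_le
    _ ≤ #T * ((#B).choose K * K.choose m) := by
        rw [sum_mul, ← smul_eq_mul]
        refine sum_le_card_nsmul _ _ _ fun t ht => ?_
        simpa only [hA t ht] using card_filter_powersetCard_superset_mul_le (A t) B K

lemma cast_choose_two_le_sq_div_two (a : ℕ) : (a.choose 2 : ℝ) ≤ a ^ 2 / 2 := by
  rw [Nat.cast_choose_two]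
  nlinarith [a.cast_nonneg (α := ℝ)]

lemma mul_choose_two_mul_choose_two_le {ε c : ℝ} {L M K B : ℕ} (hε : 0 ≤ ε)
    (hK : (K : ℝ) ≤ c * ε * √M) (hbig : ε * M * L / √2 ≤ ε * M * L - K + 1)
    (hB : ε * M * L ≤ B) :
    (M : ℝ) * L.choose 2 * K.choose 2 ≤ c ^ 2 * B.choose 2 := by
  rcases lt_or_ge K 2 with hK2 | hK2
  · rw [Nat.choose_eq_zero_of_lt hK2, Nat.cast_zero, mul_zero]
    positivity
  set X := ε * M * L
  have hX : 0 ≤ X := by positivity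
  have hB1 : X / 2 ≤ B - 1 := by
    have : X / 2 ≤ X / √2 := by
      gcongr
      rw [sqrt_le_left (by norm_num)]
      norm_num
    have : (2 : ℝ) ≤ K := by exact_mod_cast hK2
    linarith
  have hKsq : (K : ℝ) ^ 2 ≤ c ^ 2 * ε ^ 2 * M := calc
    (K : ℝ) ^ 2 ≤ (c * ε * √M) ^ 2 := by gcongr
    _ = c ^ 2 * ε ^ 2 * M := by rw [mul_pow, sq_sqrt M.cast_nonneg, mul_pow]
  have hBsq : X ^ 2 / 4 ≤ (B.choose 2 : ℝ) := by
    rw [Nat.cast_choose_two]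
    nlinarith [mul_le_mul hB hB1 (by positivity) B.cast_nonneg]
  calc (M : ℝ) * L.choose 2 * K.choose 2
      ≤ M * (L ^ 2 / 2) * (K ^ 2 / 2) := by
        gcongr <;> exact cast_choose_two_le_sq_div_two _
    _ ≤ M * (L ^ 2 / 2) * (c ^ 2 * ε ^ 2 * M / 2) := by gcongr
    _ = c ^ 2 * (X ^ 2 / 4) := by ring
    _ ≤ c ^ 2 * B.choose 2 := by gcongr

namespace Hypercube

variable {n : ℕ}

def flipBit (w : Fin n → Bool) (i : Fin n) : Fin n → Bool := Function.update w i (!w i)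

lemma flipBit_injective (w : Fin n → Bool) : Function.Injective (flipBit w) := by
  intro i j h
  by_contra hij
  simpa [flipBit, Function.update_of_ne hij] using congrFun h i

lemma hammingDist_eq_one_iff {w x : Fin n → Bool} :
    hammingDist w x = 1 ↔ ∃ i, x = flipBit w i := by
  simp only [hammingDist, card_eq_one, Finset.ext_iff, mem_filter, mem_univ, true_and,
    mem_singleton, funext_iff, flipBit, Function.update_apply]
  refine exists_congr fun i => forall_congr' fun j => ?_
  split_ifs with h
  · subst h; cases w j <;> cases x j <;> simp
  · cases w j <;> cases x j <;> simp [h]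

lemma flipBit_cons_zero (b : Bool) (u : Fin n → Bool) :
    flipBit (Fin.cons b u : Fin (n + 1) → Bool) 0 = Fin.cons (!b) u :=
  Fin.update_cons_zero ..

lemma flipBit_cons_succ (b : Bool) (u : Fin n → Bool) (i : Fin n) :
    flipBit (Fin.cons b u : Fin (n + 1) → Bool) i.succ = Fin.cons b (flipBit u i) := by
  simp [flipBit, Fin.cons_update]

lemma sum_cons {M : Type*} [AddCommMonoid M] (f : (Fin (n + 1) → Bool) → M) :
    ∑ w, f w = ∑ b, ∑ u, f (Fin.cons b u) := by
  rw [← Fintype.sum_prod_type']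
  exact (Fintype.sum_equiv (Fin.consEquiv fun _ => Bool) _ _ fun _ => rfl).symm

variable (W : Finset (Fin n → Bool))

def innerDarts : Finset ((Fin n → Bool) × Fin n) := {p ∈ W ×ˢ univ | flipBit p.1 p.2 ∈ W}

def outerDarts : Finset ((Fin n → Bool) × Fin n) := {p ∈ W ×ˢ univ | flipBit p.1 p.2 ∉ W}

lemma card_outerDarts_add_card_innerDarts : #(outerDarts W) + #(innerDarts W) = #W * n := by
  rw [outerDarts, innerDarts, add_comm, card_filter_add_card_filter_not, card_product,
    card_univ, Fintype.card_fin]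

lemma card_innerDarts_eq_sum :
    #(innerDarts W) = ∑ w, ∑ i, if w ∈ W ∧ flipBit w i ∈ W then 1 else 0 := by
  rw [innerDarts, card_filter, sum_product, ← Fintype.sum_ite_mem]
  simp only [ite_and, ite_sum_zero]

def slice (W : Finset (Fin (n + 1) → Bool)) (b : Bool) : Finset (Fin n → Bool) :=
  {u | Fin.cons b u ∈ W}

lemma card_slice_add (W : Finset (Fin (n + 1) → Bool)) :
    #(slice W false) + #(slice W true) = #W := by
  rw [card_eq_sum_ones W, ← Fintype.sum_ite_mem, sum_cons]
  simp [slice, add_comm]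

lemma card_innerDarts_cons (W : Finset (Fin (n + 1) → Bool)) :
    #(innerDarts W) = #(innerDarts (slice W false)) + #(innerDarts (slice W true)) +
      2 * #(slice W false ∩ slice W true) := by
  rw [two_mul]
  nth_rewrite 1 [inter_comm]
  simp only [card_innerDarts_eq_sum, sum_cons, Fin.sum_univ_succ, flipBit_cons_zero,
    flipBit_cons_succ, sum_add_distrib, Fintype.sum_bool]
  simp only [Bool.not_true, Bool.not_false, sum_boole, Nat.cast_id, slice, mem_filter, mem_univ,
    true_and, ← filter_and]
  ring

/-- The edge-isoperimetric inequality of the cube (`innerDarts W` counts each edge inside `W`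
twice). -/
theorem card_innerDarts_le : (#(innerDarts W) : ℝ) ≤ #W * logb 2 #W := by
  induction n with
  | zero => simpa [innerDarts] using natCast_mul_logb_nonneg #W
  | succ n ih =>
    have hinter : #(slice W false ∩ slice W true) ≤ min #(slice W false) #(slice W true) :=
      le_min (card_le_card inter_subset_left) (card_le_card inter_subset_right)
    calc (#(innerDarts W) : ℝ)
        ≤ #(innerDarts (slice W false)) + #(innerDarts (slice W true)) +
            2 * min (#(slice W false) : ℝ) #(slice W true) := by
          rw [card_innerDarts_cons]; push_cast; gcongr; exact_mod_cast hinter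
      _ ≤ #(slice W false) * logb 2 #(slice W false) + #(slice W true) * logb 2 #(slice W true)
            + 2 * min (#(slice W false) : ℝ) #(slice W true) := by
          gcongr <;> apply ih
      _ ≤ #W * logb 2 #W := by
          rw [← card_slice_add W, Nat.cast_add]
          exact mul_logb_add_mul_logb_add_two_mul_min_le (by positivity) (by positivity)

theorem le_card_outerDarts_of_card_le_two_rpow {ε : ℝ} (hW : (#W : ℝ) ≤ 2 ^ ((1 - ε) * n)) :
    ε * #W * n ≤ #(outerDarts W) := by
  have hsum : (#(outerDarts W) : ℝ) + #(innerDarts W) = #W * n := by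
    exact_mod_cast card_outerDarts_add_card_innerDarts W
  have hlog : (#W : ℝ) * logb 2 #W ≤ #W * ((1 - ε) * n) := by
    rcases (#W).eq_zero_or_pos with h | h
    · simp [h]
    · gcongr
      exact (logb_le_iff_le_rpow one_lt_two (by positivity)).2 hW
  linarith [card_innerDarts_le W]

def dartEdge (p : (Fin n → Bool) × Fin n) : (Fin n → Bool) × (Fin n → Bool) :=
  (p.1, flipBit p.1 p.2)

lemma dartEdge_injective : Function.Injective (dartEdge (n := n)) := by
  rintro ⟨w, i⟩ ⟨w', j⟩ h
  simp only [dartEdge, Prod.mk.injEq] at h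
  obtain ⟨rfl, h⟩ := h
  rw [flipBit_injective w h]

def boundaryEdges : Finset ((Fin n → Bool) × (Fin n → Bool)) := (outerDarts W).image dartEdge

lemma coe_boundaryEdges : (boundaryEdges W : Set _) = boundary n W := by
  ext ⟨w, x⟩
  simp only [boundaryEdges, outerDarts, dartEdge, coe_image, coe_filter, mem_product, mem_univ,
    and_true, Set.mem_image, Set.mem_ofPred_eq, Prod.exists, Prod.mk.injEq, boundary,
    hammingDist_eq_one_iff]
  constructor
  · rintro ⟨w, i, ⟨hw, hi⟩, rfl, rfl⟩
    exact ⟨hw, hi, i, rfl⟩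
  · rintro ⟨hw, hx, i, rfl⟩
    exact ⟨w, i, ⟨hw, hx⟩, rfl, rfl⟩

lemma card_boundaryEdges : #(boundaryEdges W) = #(outerDarts W) :=
  card_image_of_injective _ dartEdge_injective

def SharesEndpoint (S : Finset ((Fin n → Bool) × (Fin n → Bool))) : Prop :=
  ∃ e₁ ∈ S, ∃ e₂ ∈ S, e₁ ≠ e₂ ∧ e₁.1 = e₂.1

instance : DecidablePred (SharesEndpoint (n := n)) :=
  fun S => inferInstanceAs (Decidable (∃ e₁ ∈ S, ∃ e₂ ∈ S, e₁ ≠ e₂ ∧ e₁.1 = e₂.1))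

lemma setOf_isSpecial (K : ℕ) : {S | IsSpecial n K W S} =
    ↑{S ∈ (boundaryEdges W).powersetCard K | ¬ SharesEndpoint S} := by
  ext S
  simp only [IsSpecial, SharesEndpoint, ← coe_boundaryEdges, coe_subset, Set.mem_ofPred_eq,
    coe_filter, mem_powersetCard, not_exists, not_and, and_assoc]

lemma card_sharesEndpoint_mul_le (K : ℕ) :
    #{S ∈ (boundaryEdges W).powersetCard K | SharesEndpoint S} * (#(boundaryEdges W)).choose 2
      ≤ #W * n.choose 2 * ((#(boundaryEdges W)).choose K * K.choose 2) := by
  refine (card_filter_powersetCard_mul_choose_le (T := W ×ˢ univ.powersetCard 2)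
    (A := fun t => t.2.image fun i => dartEdge (t.1, i)) SharesEndpoint ?_ ?_).trans_eq ?_
  · rintro ⟨w, s⟩ hs
    exact (card_image_of_injective s (dartEdge_injective.comp (Prod.mk_right_injective w))).trans
      (mem_powersetCard.1 (mem_product.1 hs).2).2
  · rintro S hS ⟨e₁, he₁, e₂, he₂, hne, heq⟩
    obtain ⟨⟨w, i⟩, hi, rfl⟩ := mem_image.1 ((mem_powersetCard.1 hS).1 he₁)
    obtain ⟨⟨w', j⟩, -, rfl⟩ := mem_image.1 ((mem_powersetCard.1 hS).1 he₂)
    obtain rfl : w = w' := heq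
    have hij : i ≠ j := by rintro rfl; exact hne rfl
    refine ⟨(w, {i, j}), mem_product.2 ⟨(mem_product.1 (mem_filter.1 hi).1).1,
      mem_powersetCard.2 ⟨subset_univ _, card_pair hij⟩⟩, ?_⟩
    simp [insert_subset_iff, he₁, he₂]
  · rw [card_product, card_powersetCard, card_univ, Fintype.card_fin]

theorem card_sharesEndpoint_le {ε c : ℝ} {K : ℕ} (hε : 0 ≤ ε) (hK : (K : ℝ) ≤ c * ε * √(#W : ℝ))
    (hbig : ε * #W * n / √2 ≤ ε * #W * n - K + 1) (hB : ε * #W * n ≤ #(boundaryEdges W)) :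
    (#{S ∈ (boundaryEdges W).powersetCard K | SharesEndpoint S} : ℝ)
      ≤ c ^ 2 * (#(boundaryEdges W)).choose K := by
  rcases eq_empty_or_nonempty {S ∈ (boundaryEdges W).powersetCard K | SharesEndpoint S}
    with hempty | ⟨S, hS⟩
  · rw [hempty, card_empty, Nat.cast_zero]
    positivity
  obtain ⟨hSB, e₁, he₁, e₂, he₂, hne, -⟩ := mem_filter.1 hS
  have hsub := (mem_powersetCard.1 hSB).1
  have hpairs : (0 : ℝ) < (#(boundaryEdges W)).choose 2 :=
    Nat.cast_pos.2 (Nat.choose_pos (one_lt_card.2 ⟨e₁, hsub he₁, e₂, hsub he₂, hne⟩))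
  refine le_of_mul_le_mul_right ?_ hpairs
  calc _ ≤ (#W * n.choose 2 * K.choose 2 : ℝ) * (#(boundaryEdges W)).choose K := by
        exact_mod_cast (card_sharesEndpoint_mul_le W K).trans_eq (by ring)
    _ ≤ c ^ 2 * (#(boundaryEdges W)).choose 2 * (#(boundaryEdges W)).choose K :=
        mul_le_mul_of_nonneg_right (mul_choose_two_mul_choose_two_le hε hK hbig hB)
          (Nat.cast_nonneg _)
    _ = _ := by ring

end Hypercube

open Hypercube in
theorem stmt_12_general (ε c : ℝ) (hε0 : 0 < ε)
    (L M K : ℕ) (hM : (M : ℝ) ≤ 2 ^ ((1 - ε) * L))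
    (hK : (K : ℝ) ≤ c * ε * Real.sqrt M)
    (hbig : ε * M * L / Real.sqrt 2 ≤ ε * M * L - K + 1)
    (W : Finset (Fin L → Bool)) (hW : W.card = M) :
    (1 - c ^ 2) * (((boundary L W).ncard).choose K : ℝ)
      ≤ ({S | IsSpecial L K W S}.ncard : ℝ) := by
  subst hW
  have hB : ε * #W * L ≤ #(boundaryEdges W) :=
    card_boundaryEdges W ▸ le_card_outerDarts_of_card_le_two_rpow W hM
  have hbad := card_sharesEndpoint_le W hε0.le hK hbig hB
  have hsplit : (#{S ∈ (boundaryEdges W).powersetCard K | SharesEndpoint S} : ℝ) +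
      #{S ∈ (boundaryEdges W).powersetCard K | ¬ SharesEndpoint S} =
      (#(boundaryEdges W)).choose K := by
    exact_mod_cast (card_filter_add_card_filter_not _).trans (card_powersetCard _ _)
  rw [← coe_boundaryEdges, Set.ncard_coe_finset, setOf_isSpecial, Set.ncard_coe_finset]
  linarith

theorem stmt_12 (ε c : ℝ) (hε0 : 0 < ε) (hε1 : ε < 1) (hc0 : 0 < c) (hc1 : c < 1)
    (L M K : ℕ) (hM : (M : ℝ) ≤ 2 ^ ((1 - ε) * L))
    (hK : (K : ℝ) ≤ c * ε * Real.sqrt M)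
    (hbig : ε * M * L / Real.sqrt 2 ≤ ε * M * L - K + 1)
    (W : Finset (Fin L → Bool)) (hW : W.card = M) :
    (1 - c ^ 2) * (((boundary L W).ncard).choose K : ℝ)
      ≤ ({S | IsSpecial L K W S}.ncard : ℝ) :=
  stmt_12_general ε c hε0 L M K hM hK hbig W hW
end

section
/- For integers 4 ≤ M ≤ 2^{L/6}, we have log binom(2^L, M) − log( binom(2^{L/3−1}, M)³ · (M!)² · 2^{3(M−log(ML)−log M−2)} ) ≤ 12·log e + 3·log(ML) + 3·log M + 6. -/
open Real

lemma aux_exp (x : ℝ) (h0 : 0 ≤ x) (h2 : x ≤ 1/2) : Real.exp (-(2*x)) ≤ 1 - x := by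
  have h1 : 1 + 2*x ≤ Real.exp (2*x) := by
    have := Real.add_one_le_exp (2*x); linarith
  have hpos : (0:ℝ) < 1 + 2*x := by linarith
  have h3 : Real.exp (-(2*x)) ≤ 1/(1+2*x) := by
    rw [Real.exp_neg, inv_eq_one_div]
    exact one_div_le_one_div_of_le hpos h1
  refine h3.trans ?_
  rw [div_le_iff₀ hpos]
  nlinarith

theorem stmt_14 (L M : ℕ) (hM4 : 4 ≤ M) (h3L : 3 ∣ L)
    (hM : (M : ℝ) ≤ (2 : ℝ) ^ ((L : ℝ) / 6)) :
    Real.logb 2 ((2 ^ L).choose M)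
      - Real.logb 2 ((((2 ^ (L / 3 - 1)).choose M : ℝ)) ^ 3 * (M.factorial : ℝ) ^ 2 *
          (2 : ℝ) ^ (3 * ((M : ℝ) - Real.logb 2 (M * L) - Real.logb 2 M - 2)))
      ≤ 12 * Real.logb 2 (Real.exp 1) + 3 * Real.logb 2 (M * L)
        + 3 * Real.logb 2 M + 6 := by
  have h12 : (1:ℝ) < 2 := one_lt_two
  -- L ≥ 12
  have hL6 : (2:ℝ) ≤ (L:ℝ)/6 := by
    have h4 : (2:ℝ)^(2:ℝ) ≤ (2:ℝ) ^ ((L:ℝ)/6) := by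
      rw [show (2:ℝ)^(2:ℝ) = 4 by norm_num]
      calc (4:ℝ) ≤ (M:ℝ) := by exact_mod_cast hM4
        _ ≤ _ := hM
    exact (Real.rpow_le_rpow_left_iff h12).mp h4
  have hL12 : 12 ≤ L := by
    have : (12:ℝ) ≤ (L:ℝ) := by linarith
    exact_mod_cast this
  obtain ⟨K, hK⟩ := h3L
  have hK4 : 4 ≤ K := by omega
  have hL3 : L / 3 - 1 = K - 1 := by omega
  set n : ℕ := 2 ^ (L / 3 - 1) with hn
  -- cast facts
  have hcastK : ((L/3 - 1 : ℕ) : ℝ) = (L:ℝ)/3 - 1 := by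
    rw [hL3]
    have : ((K - 1 : ℕ) : ℝ) = (K:ℝ) - 1 := by
      push_cast [Nat.cast_sub (by omega : 1 ≤ K)]; ring
    rw [this, hK]; push_cast; ring
  have hnR : (n:ℝ) = (2:ℝ) ^ ((L:ℝ)/3 - 1) := by
    rw [hn]; push_cast
    rw [← Real.rpow_natCast 2 (L/3-1), hcastK]
  -- M ≤ n
  have hMn' : (M:ℝ) ≤ (n:ℝ) := by
    rw [hnR]
    refine hM.trans (Real.rpow_le_rpow_of_exponent_le (by norm_num) ?_)
    linarith
  have hMn : M ≤ n := by exact_mod_cast hMn'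
  -- M^2 ≤ 2n
  have h2n : (2:ℝ) * n = (2:ℝ) ^ ((L:ℝ)/3) := by
    rw [hnR, mul_comm, ← Real.rpow_add_one (by norm_num : (2:ℝ) ≠ 0)]
    congr 1
    ring
  have hM2 : (M:ℝ)^2 ≤ 2 * n := by
    calc (M:ℝ)^2 ≤ ((2:ℝ) ^ ((L:ℝ)/6))^2 := by
          apply pow_le_pow_left₀ (by positivity) hM
      _ = (2:ℝ) ^ ((L:ℝ)/3) := by
          rw [← Real.rpow_natCast ((2:ℝ) ^ ((L:ℝ)/6)) 2, ← Real.rpow_mul (by norm_num)]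
          norm_num; ring_nf
      _ = 2 * n := h2n.symm
  have hnpos : (0:ℝ) < n := by positivity
  have hMpos : (0:ℝ) < M := by exact_mod_cast by omega
  have hM4R : (4:ℝ) ≤ M := by exact_mod_cast hM4
  -- key real inequality
  set c : ℕ := n.choose M with hc
  have hcpos : 0 < c := Nat.choose_pos hMn
  have hdescN : (n + 1 - M) ^ M ≤ M.factorial * c := by
    rw [hc, ← Nat.descFactorial_eq_factorial_mul_choose]
    exact n.pow_sub_le_descFactorial M
  have hdesc : ((n + 1 - M : ℕ) : ℝ) ^ M ≤ (M.factorial : ℝ) * c := by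
    exact_mod_cast hdescN
  have hsub : ((n + 1 - M : ℕ) : ℝ) = (n:ℝ) + 1 - M := by
    have : M ≤ n + 1 := by omega
    push_cast [Nat.cast_sub this]; ring
  -- n ≤ exp(2(M-1)/n) * (n+1-M)
  have hx0 : (0:ℝ) ≤ ((M:ℝ)-1)/n := by
    apply div_nonneg _ hnpos.le; linarith [hM4R]
  have hx2 : ((M:ℝ)-1)/n ≤ 1/2 := by
    rw [div_le_div_iff₀ hnpos (by norm_num)]
    nlinarith
  have hexp := aux_exp (((M:ℝ)-1)/n) hx0 hx2
  have hstep : (n:ℝ) ≤ Real.exp (2*(((M:ℝ)-1)/n)) * ((n:ℝ) + 1 - M) := by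
    have h1x : 1 - ((M:ℝ)-1)/n = ((n:ℝ) + 1 - M)/n := by field_simp; ring
    rw [h1x] at hexp
    have hE : (0:ℝ) < Real.exp (2*(((M:ℝ)-1)/n)) := Real.exp_pos _
    have h2 : Real.exp (-(2*(((M:ℝ)-1)/n))) * n ≤ (n:ℝ) + 1 - M :=
      (le_div_iff₀ hnpos).mp hexp
    calc (n:ℝ) = Real.exp (2*(((M:ℝ)-1)/n)) * (Real.exp (-(2*(((M:ℝ)-1)/n))) * n) := by
          rw [← mul_assoc, ← Real.exp_add, add_neg_cancel, Real.exp_zero, one_mul]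
      _ ≤ Real.exp (2*(((M:ℝ)-1)/n)) * ((n:ℝ) + 1 - M) :=
          mul_le_mul_of_nonneg_left h2 hE.le
  -- n^{3M} ≤ exp 12 * (n+1-M)^{3M}
  have hnM1 : (0:ℝ) ≤ (n:ℝ) + 1 - M := by linarith
  have hpow : (n:ℝ)^(3*M) ≤ Real.exp 12 * ((n:ℝ)+1-M)^(3*M) := by
    calc (n:ℝ)^(3*M) ≤ (Real.exp (2*(((M:ℝ)-1)/n)) * ((n:ℝ)+1-M))^(3*M) := by
          apply pow_le_pow_left₀ hnpos.le hstep
      _ = Real.exp (2*(((M:ℝ)-1)/n))^(3*M) * ((n:ℝ)+1-M)^(3*M) := mul_pow _ _ _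
      _ ≤ Real.exp 12 * ((n:ℝ)+1-M)^(3*M) := by
          apply mul_le_mul_of_nonneg_right _ (pow_nonneg hnM1 _)
          rw [← Real.exp_nat_mul]
          apply Real.exp_le_exp.mpr
          have : ((3*M : ℕ):ℝ) * (2*(((M:ℝ)-1)/n)) = 6*(M:ℝ)*((M:ℝ)-1)/n := by
            push_cast; ring
          rw [this, div_le_iff₀ hnpos]
          nlinarith
  -- assemble key
  have hfacpos : (0:ℝ) < (M.factorial : ℝ) := by exact_mod_cast M.factorial_pos
  have h2LN : ((2:ℕ)^L) ^ M = (2*n)^(3*M) := by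
    have hh : 2 * n = 2^(L/3) := by
      rw [hn, ← pow_succ']
      congr 1
      omega
    have hdiv : L / 3 = K := by omega
    rw [hh, ← pow_mul, ← pow_mul]
    congr 1
    rw [hdiv, hK]
    ring
  have h2L : ((2:ℝ)^L)^M = (2:ℝ)^(3*M) * (n:ℝ)^(3*M) := by
    rw [← mul_pow]
    exact_mod_cast congrArg (Nat.cast (R:=ℝ)) h2LN
  have hkey : (((2^L).choose M : ℕ) : ℝ) ≤
      Real.exp 12 * (c:ℝ)^3 * (M.factorial:ℝ)^2 * (2:ℝ)^(3*M) := by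
    have h1 : (((2^L).choose M : ℕ) : ℝ) ≤ ((2^L : ℕ):ℝ)^M / M.factorial := by
      exact_mod_cast Nat.choose_le_pow_div M (2^L)
    have h2 : ((2^L : ℕ):ℝ)^M = (2:ℝ)^(3*M) * (n:ℝ)^(3*M) := by
      push_cast; exact h2L
    rw [h2] at h1
    refine h1.trans ?_
    rw [div_le_iff₀ hfacpos]
    have h3 : ((n:ℝ)+1-M)^(3*M) ≤ ((M.factorial:ℝ) * c)^3 := by
      calc ((n:ℝ)+1-M)^(3*M) = (((n:ℝ)+1-M)^M)^3 := by rw [← pow_mul]; ring_nf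
        _ ≤ ((M.factorial:ℝ) * c)^3 := by
            apply pow_le_pow_left₀ (pow_nonneg hnM1 _)
            rw [← hsub]
            exact hdesc
    calc (2:ℝ)^(3*M) * (n:ℝ)^(3*M)
        ≤ (2:ℝ)^(3*M) * (Real.exp 12 * ((n:ℝ)+1-M)^(3*M)) := by
          apply mul_le_mul_of_nonneg_left hpow (by positivity)
      _ ≤ (2:ℝ)^(3*M) * (Real.exp 12 * ((M.factorial:ℝ) * c)^3) := by
          apply mul_le_mul_of_nonneg_left _ (by positivity)
          exact mul_le_mul_of_nonneg_left h3 (Real.exp_pos _).le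
      _ = Real.exp 12 * (c:ℝ)^3 * (M.factorial:ℝ)^2 * (2:ℝ)^(3*M) * M.factorial := by
          ring
  -- now take logs
  have hApos : (0:ℝ) < ((2^L).choose M : ℕ) := by
    have : 0 < (2^L).choose M := Nat.choose_pos (hMn.trans (Nat.pow_le_pow_right (by norm_num) (by omega)))
    exact_mod_cast this
  have hlogkey : Real.logb 2 ((2^L).choose M) ≤
      12 * Real.logb 2 (Real.exp 1) + 3 * Real.logb 2 c + 2 * Real.logb 2 (M.factorial) + 3*M := by
    have := (Real.logb_le_logb h12 hApos (by positivity)).mpr hkey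
    refine this.trans_eq ?_
    rw [Real.logb_mul (by positivity) (by positivity),
        Real.logb_mul (by positivity) (by positivity),
        Real.logb_mul (by positivity) (by positivity)]
    rw [Real.logb_pow, Real.logb_pow, Real.logb_pow,
        Real.logb_self_eq_one h12]
    have he : Real.logb 2 (Real.exp 12) = 12 * Real.logb 2 (Real.exp 1) := by
      simp [Real.logb, Real.log_exp]; ring
    rw [he]; push_cast; ring
  -- expand logb of the product in the goal
  have hBlog : Real.logb 2 (((c : ℝ)) ^ 3 * (M.factorial : ℝ) ^ 2 *
          (2 : ℝ) ^ (3 * ((M : ℝ) - Real.logb 2 (M * L) - Real.logb 2 M - 2)))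
      = 3 * Real.logb 2 c + 2 * Real.logb 2 (M.factorial)
        + 3 * ((M : ℝ) - Real.logb 2 (M * L) - Real.logb 2 M - 2) := by
    rw [Real.logb_mul (by positivity) (by positivity),
        Real.logb_mul (by positivity) (by positivity),
        Real.logb_pow, Real.logb_pow,
        Real.logb_rpow (by norm_num) (by norm_num)]
    push_cast; ring
  rw [hBlog]
  linarith
end

section
/- For integers 4 ≤ M ≤ 2^{L/(2(2K+1))} and K ≥ 1 (with 2K+1 dividing L), log binom(2^L, M) − log( binom(2^{L/(2K+1)−1}, M)^{2K+1} · (M!)^{2K} · 2^{(2K+1)(M − 2K·log(ML) − 2K·log M)} ) ≤ (2K+1)·log e + 2K(2K+1)·log(ML) + 2K(2K+1)·log M. -/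
/-!
Put `ℓ = L / (2K+1)` and `m = 2^(ℓ-1)`, so that `2^L = (2m)^(2K+1)` and `M² ≤ 2m`.
On the one hand `binom(2^L, M) · M! ≤ (2m)^(M(2K+1))`. On the other hand
`m^M ≤ e · m(m-1)⋯(m-M+1) = e · M! · binom(m, M)`, because
`∑_{i<M} log (m / (m - i)) ≤ ∑_{i<M} (i/m + i²/(2m(m-i))) ≤ 1` as soon as `M² ≤ 2m`. Hence
`binom(2^L, M) ≤ binom(m, M)^(2K+1) · (M!)^(2K) · (2^M e)^(2K+1)`; after taking `logb 2`,
the `log(ML)` and `log M` terms of the statement cancel.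
-/

open Real Finset
open scoped Nat

lemma Nat.le_of_sq_le_two_mul {m M : ℕ} (h : M ^ 2 ≤ 2 * m) : M ≤ m := by
  nlinarith

lemma Real.log_le_sub_inv_div_two {x : ℝ} (hx : 1 ≤ x) : log x ≤ (x - x⁻¹) / 2 := by
  rw [← sinh_log (by positivity)]
  exact self_le_sinh_iff.mpr (log_nonneg hx)

lemma Real.log_sub_log_sub_le {a i : ℝ} (hi : 0 ≤ i) (hia : i < a) :
    log a - log (a - i) ≤ i / a + i ^ 2 / (2 * a * (a - i)) := by
  have ha : 0 < a := hi.trans_lt hia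
  have hai : 0 < a - i := sub_pos.mpr hia
  calc log a - log (a - i) = log (a / (a - i)) := (log_div ha.ne' hai.ne').symm
    _ ≤ (a / (a - i) - (a / (a - i))⁻¹) / 2 :=
      log_le_sub_inv_div_two ((one_le_div hai).mpr (by linarith))
    _ = i / a + i ^ 2 / (2 * a * (a - i)) := by field_simp; ring

lemma Finset.sum_range_natCast_id {R : Type*} [Field R] [CharZero R] (M : ℕ) :
    ∑ i ∈ range M, (i : R) = M * (M - 1) / 2 := by
  induction M with
  | zero => simp
  | succ n ih => rw [sum_range_succ, ih]; push_cast; ring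

lemma sum_log_sub_log_sub_le_one {m M : ℕ} (h : M ^ 2 ≤ 2 * m) :
    ∑ i ∈ range M, (log m - log ((m : ℝ) - i)) ≤ 1 := by
  rcases Nat.eq_zero_or_pos M with rfl | hM
  · simp
  have hMm : M ≤ m := Nat.le_of_sq_le_two_mul h
  have hMr : (M : ℝ) ^ 2 ≤ 2 * m := by exact_mod_cast h
  have hMmr : (M : ℝ) ≤ m := by exact_mod_cast hMm
  have hm : (0 : ℝ) < m := by
    have : (1 : ℝ) ≤ M := by exact_mod_cast hM
    linarith
  have hu : (0 : ℝ) < m - M + 1 := by linarith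
  calc ∑ i ∈ range M, (log m - log ((m : ℝ) - i))
      ≤ ∑ i ∈ range M, (i : ℝ) * (1 / m + (M - 1) / (2 * m * (m - M + 1))) := by
        refine sum_le_sum fun i hi => ?_
        have hiM : (i : ℝ) + 1 ≤ M := by exact_mod_cast mem_range.mp hi
        have hi0 : (0 : ℝ) ≤ i := i.cast_nonneg
        calc log m - log ((m : ℝ) - i) ≤ i / m + i * i / (2 * m * (m - i)) := by
              rw [← pow_two]; exact log_sub_log_sub_le hi0 (by linarith)
          _ ≤ i / m + i * (M - 1) / (2 * m * (m - M + 1)) := by gcongr <;> nlinarith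
          _ = _ := by ring
    _ = M * (M - 1) / 2 * (1 / m + (M - 1) / (2 * m * (m - M + 1))) := by
        rw [← sum_mul, sum_range_natCast_id]
    _ ≤ 1 := by
        rw [div_add_div _ _ hm.ne' (by positivity), div_mul_div_comm, div_le_one (by positivity)]
        have hsq : (0 : ℝ) ≤ 2 * m - M ^ 2 := sub_nonneg.mpr hMr
        have hM0 : (0 : ℝ) ≤ M := M.cast_nonneg
        nlinarith [mul_nonneg hm.le (mul_nonneg hu.le hsq),
          mul_nonneg hm.le (mul_nonneg hM0 (by linarith : (0 : ℝ) ≤ 2 * m - M ^ 2 + 1))]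

lemma pow_le_exp_one_mul_descFactorial {m M : ℕ} (h : M ^ 2 ≤ 2 * m) :
    (m : ℝ) ^ M ≤ exp 1 * m.descFactorial M := by
  have hMm : M ≤ m := Nat.le_of_sq_le_two_mul h
  have hpos : ∀ i ∈ range M, (0 : ℝ) < m - i := fun i hi => by
    have : (i : ℝ) < m := by exact_mod_cast (mem_range.mp hi).trans_le hMm
    linarith
  have hdesc : (m.descFactorial M : ℝ) = ∏ i ∈ range M, ((m : ℝ) - i) := by
    rw [Nat.descFactorial_eq_prod_range, Nat.cast_prod]
    refine prod_congr rfl fun i hi => ?_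
    rw [Nat.cast_sub ((mem_range.mp hi).le.trans hMm)]
  have hlog : M * log m ≤ 1 + log (m.descFactorial M) := by
    have := sum_log_sub_log_sub_le_one h
    rw [sum_sub_distrib, sum_const, card_range, nsmul_eq_mul,
      ← log_prod fun i hi => (hpos i hi).ne', ← hdesc] at this
    linarith
  have hd : (0 : ℝ) < m.descFactorial M := by rw [hdesc]; exact prod_pos hpos
  calc (m : ℝ) ^ M = exp (M * log m) := by
        rcases Nat.eq_zero_or_pos m with hm | hm
        · subst hm; simp_all
        rw [← log_pow, exp_log (by positivity)]
    _ ≤ exp (1 + log (m.descFactorial M)) := exp_le_exp.mpr hlog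
    _ = exp 1 * m.descFactorial M := by rw [exp_add, exp_log hd]

lemma choose_two_mul_pow_le {m M : ℕ} (s : ℕ) (h : M ^ 2 ≤ 2 * m) :
    (((2 * m) ^ (s + 1)).choose M : ℝ) ≤
      (m.choose M : ℝ) ^ (s + 1) * (M ! : ℝ) ^ s * (2 ^ M * exp 1) ^ (s + 1) := by
  have hF : (0 : ℝ) < M ! := by positivity
  calc (((2 * m) ^ (s + 1)).choose M : ℝ)
      ≤ (2 ^ M * (m : ℝ) ^ M) ^ (s + 1) / M ! := by
        refine (Nat.choose_le_pow_div M _).trans_eq ?_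
        push_cast; ring
    _ ≤ (2 ^ M * (exp 1 * (M ! * m.choose M))) ^ (s + 1) / M ! := by
        gcongr
        exact_mod_cast Nat.descFactorial_eq_factorial_mul_choose m M ▸
          pow_le_exp_one_mul_descFactorial h
    _ = _ := by field_simp; ring

lemma logb_choose_two_mul_pow_le {m M : ℕ} (s : ℕ) (h : M ^ 2 ≤ 2 * m) :
    logb 2 (((2 * m) ^ (s + 1)).choose M) ≤
      (s + 1) * logb 2 (m.choose M) + s * logb 2 (M ! : ℝ) + (s + 1) * (M + logb 2 (exp 1)) := by
  have hMm : M ≤ m := Nat.le_of_sq_le_two_mul h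
  have hC : (0 : ℝ) < m.choose M := by exact_mod_cast Nat.choose_pos hMm
  have hN : (0 : ℝ) < ((2 * m) ^ (s + 1)).choose M := by
    have : m ≤ (2 * m) ^ (s + 1) := by
      calc m ≤ 2 * m := by omega
        _ ≤ (2 * m) ^ (s + 1) := Nat.le_self_pow (by omega) _
    exact_mod_cast Nat.choose_pos (hMm.trans this)
  refine (logb_le_logb_of_le (b := 2) one_lt_two hN (choose_two_mul_pow_le s h)).trans_eq ?_
  rw [logb_mul (by positivity) (by positivity), logb_mul (by positivity) (by positivity),
    logb_pow, logb_pow, logb_pow, logb_mul (by positivity) (by positivity), logb_pow,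
    logb_self_eq_one one_lt_two]
  push_cast; ring

theorem stmt_17_general (L M K : ℕ) (hM4 : 4 ≤ M) (hdvd : (2 * K + 1) ∣ L)
    (hM : (M : ℝ) ≤ (2 : ℝ) ^ ((L : ℝ) / (2 * (2 * (K : ℝ) + 1)))) :
    Real.logb 2 ((2 ^ L).choose M)
      - Real.logb 2 ((((2 ^ (L / (2 * K + 1) - 1)).choose M : ℝ)) ^ (2 * K + 1)
          * (M.factorial : ℝ) ^ (2 * K)
          * (2 : ℝ) ^ ((2 * (K : ℝ) + 1) *
              ((M : ℝ) - 2 * K * Real.logb 2 (M * L) - 2 * K * Real.logb 2 M)))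
      ≤ (2 * (K : ℝ) + 1) * Real.logb 2 (Real.exp 1)
        + 2 * K * (2 * (K : ℝ) + 1) * Real.logb 2 (M * L)
        + 2 * K * (2 * (K : ℝ) + 1) * Real.logb 2 M := by
  obtain ⟨ℓ, rfl⟩ := hdvd
  rw [Nat.mul_div_cancel_left ℓ (by omega)]
  have hsq : M ^ 2 ≤ 2 ^ ℓ := by
    have hexp : (((2 * K + 1) * ℓ : ℕ) : ℝ) / (2 * (2 * K + 1)) = ℓ / 2 := by
      push_cast; field_simp
    rw [hexp] at hM
    have : (M : ℝ) ^ 2 ≤ 2 ^ ℓ :=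
      calc (M : ℝ) ^ 2 ≤ ((2 : ℝ) ^ ((ℓ : ℝ) / 2)) ^ 2 := by gcongr
        _ = 2 ^ ℓ := by rw [← rpow_natCast _ 2, ← rpow_mul zero_le_two]; norm_num
    exact_mod_cast this
  have hℓ : ℓ - 1 + 1 = ℓ := by
    have : ℓ ≠ 0 := by rintro rfl; simp at hsq; nlinarith
    omega
  have hsq' : M ^ 2 ≤ 2 * 2 ^ (ℓ - 1) := hsq.trans_eq (by rw [← pow_succ', hℓ])
  have hC : 0 < (2 ^ (ℓ - 1)).choose M := Nat.choose_pos (Nat.le_of_sq_le_two_mul hsq')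
  have key := logb_choose_two_mul_pow_le (2 * K) hsq'
  have hpow : 2 ^ ((2 * K + 1) * ℓ) = (2 * 2 ^ (ℓ - 1)) ^ (2 * K + 1) := by
    rw [← pow_succ', hℓ, ← pow_mul, mul_comm]
  rw [hpow, logb_mul (by positivity) (by positivity), logb_mul (by positivity) (by positivity),
    logb_pow, logb_pow, logb_rpow two_pos (by norm_num)]
  push_cast at key ⊢
  linarith

theorem stmt_17 (L M K : ℕ) (hK : 1 ≤ K) (hM4 : 4 ≤ M) (hdvd : (2 * K + 1) ∣ L)
    (hM : (M : ℝ) ≤ (2 : ℝ) ^ ((L : ℝ) / (2 * (2 * (K : ℝ) + 1)))) :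
    Real.logb 2 ((2 ^ L).choose M)
      - Real.logb 2 ((((2 ^ (L / (2 * K + 1) - 1)).choose M : ℝ)) ^ (2 * K + 1)
          * (M.factorial : ℝ) ^ (2 * K)
          * (2 : ℝ) ^ ((2 * (K : ℝ) + 1) *
              ((M : ℝ) - 2 * K * Real.logb 2 (M * L) - 2 * K * Real.logb 2 M)))
      ≤ (2 * (K : ℝ) + 1) * Real.logb 2 (Real.exp 1)
        + 2 * K * (2 * (K : ℝ) + 1) * Real.logb 2 (M * L)
        + 2 * K * (2 * (K : ℝ) + 1) * Real.logb 2 M :=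
  stmt_17_general L M K hM4 hdvd hM
end

section
/- Let L', M, K be positive integers and Q = ∑_{i=0}^{2K} binom(L', i). If MQ ≤ 2^{L'}, then the number of M-element subsets of {0,1}^{L'} that contain the all-ones string and have pairwise Hamming distance at least 2K+1 is at least (∏_{i=1}^{M−1}(2^{L'} − iQ)) / (M−1)!. -/
/-!
Double counting. Let `𝒜ₖ` be the family of `k`-element codes of minimum distance `> r` through a
fixed word `v₀`. Every `S ∈ 𝒜ₖ` extends to `insert w S ∈ 𝒜ₖ₊₁` for each word `w` outside the
`k` radius-`r` balls around `S`, at least `2^L' - kQ` choices; every `T ∈ 𝒜ₖ₊₁` arises in this way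
from at most `k` sets `S`, namely `T.erase a` with `a ≠ v₀`. Hence
`|𝒜ₖ| (2^L' - kQ) ≤ k |𝒜ₖ₊₁|`, and iterating from `|𝒜₁| = 1` gives the bound.
-/

open Finset

theorem card_hammingDist_le_le_sum_choose {ι : Type*} [Fintype ι] [DecidableEq ι] (v : ι → Bool)
    (r : ℕ) :
    #{w | hammingDist v w ≤ r} ≤ ∑ i ∈ range (r + 1), (Fintype.card ι).choose i := by
  let support : (ι → Bool) → Finset ι := fun w => {i | v i ≠ w i}
  have support_injective : support.Injective := by
    intro w₁ w₂ h
    funext i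
    have := congrArg (i ∈ ·) h
    simp only [support, mem_filter, mem_univ, true_and, eq_iff_iff] at this
    revert this
    cases v i <;> cases w₁ i <;> cases w₂ i <;> simp
  calc #{w | hammingDist v w ≤ r}
      ≤ #((range (r + 1)).biUnion fun i => powersetCard i univ) := by
        refine card_le_card_of_injOn support (fun w hw => ?_) support_injective.injOn
        simp only [coe_filter, mem_univ, true_and, Set.mem_ofPred_eq] at hw
        simp only [coe_biUnion, coe_range, Set.mem_Iio, Set.mem_iUnion, mem_coe,
          mem_powersetCard, subset_univ, true_and]
        exact ⟨_, Nat.lt_succ_of_le hw, rfl⟩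
    _ ≤ ∑ i ∈ range (r + 1), #(powersetCard i (univ : Finset ι)) := card_biUnion_le
    _ = ∑ i ∈ range (r + 1), (Fintype.card ι).choose i := by simp [card_powersetCard]

section GreedyCount

variable {ι : Type*} {β : ι → Type*} [Fintype ι] [DecidableEq ι] [∀ i, Fintype (β i)]
  [∀ i, DecidableEq (β i)]

def codesContaining (v₀ : ∀ i, β i) (r k : ℕ) : Finset (Finset (∀ i, β i)) :=
  {S | #S = k ∧ v₀ ∈ S ∧ (S : Set (∀ i, β i)).Pairwise fun a b => r + 1 ≤ hammingDist a b}

variable {v₀ : ∀ i, β i} {r k Q : ℕ}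

theorem mem_codesContaining {S : Finset (∀ i, β i)} :
    S ∈ codesContaining v₀ r k ↔
      #S = k ∧ v₀ ∈ S ∧ (S : Set (∀ i, β i)).Pairwise fun a b => r + 1 ≤ hammingDist a b := by
  simp [codesContaining]

theorem card_sub_card_mul_le_card_far (hQ : ∀ v : ∀ i, β i, #{w | hammingDist v w ≤ r} ≤ Q)
    (P : Finset (∀ i, β i)) :
    Fintype.card (∀ i, β i) - #P * Q ≤ #{w | ∀ p ∈ P, r + 1 ≤ hammingDist p w} := by
  have near_subset : ({w | ¬ ∀ p ∈ P, r + 1 ≤ hammingDist p w} : Finset (∀ i, β i)) ⊆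
      P.biUnion fun p => {w | hammingDist p w ≤ r} := by
    intro w
    simp
  have card_near : #{w | ¬ ∀ p ∈ P, r + 1 ≤ hammingDist p w} ≤ #P * Q :=
    (card_le_card near_subset).trans (card_biUnion_le_card_mul _ _ _ fun p _ => hQ p)
  have := card_filter_add_card_filter_not (s := univ) fun w => ∀ p ∈ P, r + 1 ≤ hammingDist p w
  rw [card_univ] at this
  omega

theorem card_codesContaining_mul_le (hQ : ∀ v : ∀ i, β i, #{w | hammingDist v w ≤ r} ≤ Q) :
    #(codesContaining v₀ r k) * (Fintype.card (∀ i, β i) - k * Q) ≤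
      #(codesContaining v₀ r (k + 1)) * k := by
  refine card_mul_le_card_mul (· ⊆ ·) (fun S hS => ?_) (fun T hT => ?_)
  · obtain ⟨hcard, hv₀, hsep⟩ := mem_codesContaining.1 hS
    have far_notMem : ∀ w ∈ ({w | ∀ p ∈ S, r + 1 ≤ hammingDist p w} : Finset _), w ∉ S :=
      fun w hw hwS => by simpa using (mem_filter.1 hw).2 w hwS
    refine hcard ▸ (card_sub_card_mul_le_card_far hQ S).trans
      (card_le_card_of_injOn (insert · S) (fun w hw => ?_) fun w₁ hw₁ w₂ _ h => ?_)
    · have hwS := far_notMem w hw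
      simp only [coe_filter, mem_univ, true_and, Set.mem_ofPred_eq] at hw
      simp only [coe_bipartiteAbove, Set.mem_ofPred_eq, mem_codesContaining,
        card_insert_of_notMem hwS, hcard, mem_insert, hv₀, or_true, true_and, coe_insert,
        Set.pairwise_insert, subset_insert, and_true]
      exact ⟨hsep, fun b hb _ => ⟨hammingDist_comm b w ▸ hw b hb, hw b hb⟩⟩
    · exact (insert_inj (far_notMem w₁ hw₁)).1 h
  · obtain ⟨hcard, hv₀, -⟩ := mem_codesContaining.1 hT
    calc #(bipartiteBelow (· ⊆ ·) (codesContaining v₀ r k) T)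
        ≤ #((T.erase v₀).image T.erase) := card_le_card fun S hS => ?_
      _ ≤ #(T.erase v₀) := card_image_le
      _ = k := by rw [card_erase_of_mem hv₀, hcard, Nat.add_sub_cancel]
    obtain ⟨hS, hST⟩ := (mem_bipartiteBelow _).1 hS
    obtain ⟨hScard, hv₀S, -⟩ := mem_codesContaining.1 hS
    obtain ⟨a, haS, rfl⟩ := exists_eq_insert_iff.2 ⟨hST, by rw [hScard, hcard]⟩
    refine mem_image.2 ⟨a, mem_erase.2 ⟨?_, mem_insert_self a S⟩, erase_insert haS⟩
    rintro rfl
    exact haS hv₀S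

open Nat in
theorem prod_sub_mul_le_factorial_mul_card_codesContaining
    (hQ : ∀ v : ∀ i, β i, #{w | hammingDist v w ≤ r} ≤ Q) (m : ℕ) :
    ∏ i ∈ Icc 1 m, (Fintype.card (∀ i, β i) - i * Q) ≤ m ! * #(codesContaining v₀ r (m + 1)) := by
  induction m with
  | zero => simpa using card_pos.2 ⟨{v₀}, by simp [mem_codesContaining]⟩
  | succ m ih =>
    rw [prod_Icc_succ_top (by omega), factorial_succ]
    calc _ ≤ m ! * #(codesContaining v₀ r (m + 1)) * (Fintype.card (∀ i, β i) - (m + 1) * Q) :=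
          Nat.mul_le_mul_right _ ih
      _ ≤ m ! * (#(codesContaining v₀ r (m + 1 + 1)) * (m + 1)) := by
          rw [mul_assoc]
          exact Nat.mul_le_mul_left _ (card_codesContaining_mul_le hQ)
      _ = (m + 1) * m ! * #(codesContaining v₀ r (m + 1 + 1)) := by ring

end GreedyCount

theorem stmt_19_general (L' M K : ℕ) (hM : 0 < M)
    (hQ : M * (∑ i ∈ Finset.range (2 * K + 1), L'.choose i) ≤ 2 ^ L') :
    (∏ i ∈ Finset.Icc 1 (M - 1),
        ((2 ^ L' : ℝ) - (i : ℝ) * (∑ i ∈ Finset.range (2 * K + 1), L'.choose i : ℕ)))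
      / ((M - 1).factorial : ℝ)
    ≤ (({S : Finset (Fin L' → Bool) | S.card = M ∧ (fun _ => true) ∈ S ∧
          ∀ a ∈ S, ∀ b ∈ S, a ≠ b → 2 * K + 1 ≤ hammingDist a b}).ncard : ℝ) := by
  set Q := ∑ i ∈ range (2 * K + 1), L'.choose i
  obtain ⟨m, rfl⟩ : ∃ m, M = m + 1 := ⟨M - 1, by omega⟩
  have hball (v : Fin L' → Bool) : #{w | hammingDist v w ≤ 2 * K} ≤ Q := by
    simpa using card_hammingDist_le_le_sum_choose v (2 * K)
  have hcount := prod_sub_mul_le_factorial_mul_card_codesContaining (v₀ := fun _ => true) hball m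
  have hset : {S : Finset (Fin L' → Bool) | #S = m + 1 ∧ (fun _ => true) ∈ S ∧
      ∀ a ∈ S, ∀ b ∈ S, a ≠ b → 2 * K + 1 ≤ hammingDist a b} =
      ↑(codesContaining (fun _ : Fin L' => true) (2 * K) (m + 1)) := by
    ext S
    simp [mem_codesContaining, Set.Pairwise]
  have hcast : ∏ i ∈ Icc 1 m, ((2 ^ L' : ℝ) - i * Q) =
      ((∏ i ∈ Icc 1 m, (2 ^ L' - i * Q) : ℕ) : ℝ) := by
    push_cast
    refine prod_congr rfl fun i hi => ?_
    rw [Nat.cast_sub ((Nat.mul_le_mul_right Q (mem_Icc.1 hi).2).trans (by linarith))]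
    push_cast
    ring
  rw [hset, Set.ncard_coe_finset, Nat.add_sub_cancel, div_le_iff₀ (by positivity), hcast,
    mul_comm]
  simp only [Fintype.card_fun, Fintype.card_bool, Fintype.card_fin] at hcount
  exact_mod_cast hcount

theorem stmt_19 (L' M K : ℕ) (hL : 0 < L') (hM : 0 < M) (hK : 0 < K)
    (hQ : M * (∑ i ∈ Finset.range (2 * K + 1), L'.choose i) ≤ 2 ^ L') :
    (∏ i ∈ Finset.Icc 1 (M - 1),
        ((2 ^ L' : ℝ) - (i : ℝ) * (∑ i ∈ Finset.range (2 * K + 1), L'.choose i : ℕ)))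
      / ((M - 1).factorial : ℝ)
    ≤ (({S : Finset (Fin L' → Bool) | S.card = M ∧ (fun _ => true) ∈ S ∧
          ∀ a ∈ S, ∀ b ∈ S, a ≠ b → 2 * K + 1 ≤ hammingDist a b}).ncard : ℝ) :=
  stmt_19_general L' M K hM hQ
end
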